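/- arXiv:2304.08143 — 8 statements merged into one kernel-verified Lean document; each statement's English description precedes it below -/
import Mathlib

section
/- For every integer N ≥ 3, Φ(N) = Υ(N² − 4); that is, the number of matrices in the monoid generated by A and B with trace N equals the number of triples (λ, μ, m) ∈ ℕ≥1 × ℕ≥1 × ℤ with 4λμ + m² = N² − 4. -/
open Matrix

def A : Matrix (Fin 2) (Fin 2) ℤ := !![1, 0; 1, 1]

def B : Matrix (Fin 2) (Fin 2) ℤ := !![1, 1; 0, 1]

noncomputable def Phi (N : ℤ) : ℕ :=
  {C : Matrix (Fin 2) (Fin 2) ℤ |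
    C ∈ Submonoid.closure {A, B} ∧ Matrix.trace C = N}.ncard

noncomputable def Upsilon (X : ℤ) : ℕ :=
  {p : ℤ × ℤ × ℤ | 0 < p.1 ∧ 0 < p.2.1 ∧ 4 * p.1 * p.2.1 + p.2.2 ^ 2 = X}.ncard

/-- Every element of the monoid has nonnegative entries and determinant 1. -/
lemma mem_closure_nonneg_det (C : Matrix (Fin 2) (Fin 2) ℤ)
    (h : C ∈ Submonoid.closure {A, B}) : (∀ i j, 0 ≤ C i j) ∧ C.det = 1 := by
  induction h using Submonoid.closure_induction with
  | mem x hx =>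
    rcases hx with hx | hx <;> subst hx <;>
      refine ⟨fun i j => ?_, by simp [A, B, Matrix.det_fin_two]⟩ <;>
      fin_cases i <;> fin_cases j <;> simp [A, B]
  | one => exact ⟨fun i j => by fin_cases i <;> fin_cases j <;> simp, by simp⟩
  | mul x y hx hy ihx ihy =>
    refine ⟨fun i j => ?_, by rw [Matrix.det_mul, ihx.2, ihy.2, one_mul]⟩
    rw [Matrix.mul_apply, Fin.sum_univ_two]
    have h1 := mul_nonneg (ihx.1 i 0) (ihy.1 0 j)
    have h2 := mul_nonneg (ihx.1 i 1) (ihy.1 1 j)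
    linarith

/-- Trichotomy for nonnegative determinant-one matrices. -/
lemma trichotomy (a b c d : ℤ) (ha : 0 ≤ a) (hb : 0 ≤ b) (hc : 0 ≤ c) (hd : 0 ≤ d)
    (hdet : a * d - b * c = 1) :
    (c ≤ a ∧ d ≤ b) ∨ (a ≤ c ∧ b ≤ d) ∨ (a = 1 ∧ b = 0 ∧ c = 0 ∧ d = 1) := by
  rcases le_or_gt c a with hca | hca
  · rcases le_or_gt d b with hdb | hdb
    · exact Or.inl ⟨hca, hdb⟩
    · rcases eq_or_lt_of_le hca with h | h
      · right; left
        constructor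
        · omega
        · omega
      · right; right
        have hb0 : b = 0 ∧ c = 0 := by constructor <;> nlinarith
        obtain ⟨hb0, hc0⟩ := hb0
        subst hb0; subst hc0
        simp only [mul_zero, sub_zero] at hdet
        constructor
        · nlinarith
        constructor; · rfl
        constructor; · rfl
        nlinarith
  · -- c > a; claim b ≤ d
    have hbd : b ≤ d := by nlinarith
    exact Or.inr (Or.inl ⟨le_of_lt hca, hbd⟩)

lemma entry_sum_pos (a b c d : ℤ) (ha : 0 ≤ a) (hb : 0 ≤ b) (hc : 0 ≤ c) (hd : 0 ≤ d)
    (hdet : a * d - b * c = 1) : (1 ≤ a + b) ∧ (1 ≤ c + d) := by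
  constructor
  · by_contra h
    push_neg at h
    have h1 : a = 0 := by omega
    have h2 : b = 0 := by omega
    rw [h1, h2] at hdet; simp at hdet
  · by_contra h
    push_neg at h
    have h1 : c = 0 := by omega
    have h2 : d = 0 := by omega
    rw [h1, h2] at hdet; simp at hdet

/-- Every nonnegative determinant-one matrix lies in the monoid. -/
lemma nonneg_det_mem_closure : ∀ n : ℕ, ∀ C : Matrix (Fin 2) (Fin 2) ℤ,
    (∀ i j, 0 ≤ C i j) → C.det = 1 →
    (C 0 0 + C 0 1 + C 1 0 + C 1 1).toNat ≤ n →
    C ∈ Submonoid.closure {A, B} := by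
  intro n
  induction n with
  | zero =>
    intro C hpos hdet hsum
    exfalso
    have h00 := hpos 0 0; have h01 := hpos 0 1; have h10 := hpos 1 0; have h11 := hpos 1 1
    rw [Matrix.det_fin_two] at hdet
    have : C 0 0 = 0 ∧ C 1 1 = 0 := by omega
    nlinarith [this.1, this.2]
  | succ n ih =>
    intro C hpos hdet hsum
    set a := C 0 0 with ha'
    set b := C 0 1 with hb'
    set c := C 1 0 with hc'
    set d := C 1 1 with hd'
    have h00 := hpos 0 0; have h01 := hpos 0 1; have h10 := hpos 1 0; have h11 := hpos 1 1
    rw [Matrix.det_fin_two] at hdet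
    rcases trichotomy a b c d h00 h01 h10 h11 hdet with ⟨h1, h2⟩ | ⟨h1, h2⟩ | ⟨h1, h2, h3, h4⟩
    · -- C = B * C'
      have hcd : 1 ≤ c + d := (entry_sum_pos a b c d h00 h01 h10 h11 hdet).2
      set C' : Matrix (Fin 2) (Fin 2) ℤ := !![a - c, b - d; c, d] with hC'
      have hmul : B * C' = C := by
        rw [Matrix.eta_fin_two C, ← ha', ← hb', ← hc', ← hd', hC', B, Matrix.mul_fin_two]
        congr 1 <;> ring
      have hmem : C' ∈ Submonoid.closure {A, B} := by
        apply ih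
        · intro i j; fin_cases i <;> fin_cases j <;> simp [hC'] <;> omega
        · rw [Matrix.det_fin_two]; simp [hC']; ring_nf; nlinarith
        · simp [hC']; omega
      rw [← hmul]
      exact mul_mem (Submonoid.subset_closure (by simp)) hmem
    · -- C = A * C'
      have hab : 1 ≤ a + b := (entry_sum_pos a b c d h00 h01 h10 h11 hdet).1
      set C' : Matrix (Fin 2) (Fin 2) ℤ := !![a, b; c - a, d - b] with hC'
      have hmul : A * C' = C := by
        rw [Matrix.eta_fin_two C, ← ha', ← hb', ← hc', ← hd', hC', A, Matrix.mul_fin_two]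
        congr 1 <;> ring
      have hmem : C' ∈ Submonoid.closure {A, B} := by
        apply ih
        · intro i j; fin_cases i <;> fin_cases j <;> simp [hC'] <;> omega
        · rw [Matrix.det_fin_two]; simp [hC']; ring_nf; nlinarith
        · simp [hC']; omega
      rw [← hmul]
      exact mul_mem (Submonoid.subset_closure (by simp)) hmem
    · -- C = 1
      have : C = 1 := by
        rw [Matrix.eta_fin_two C, ← ha', ← hb', ← hc', ← hd', h1, h2, h3, h4]
        exact Matrix.one_fin_two.symm
      rw [this]
      exact one_mem _

theorem stmt0 (N : ℤ) (hN : 3 ≤ N) : Phi N = Upsilon (N ^ 2 - 4) := by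
  classical
  set S := {C : Matrix (Fin 2) (Fin 2) ℤ |
    C ∈ Submonoid.closure {A, B} ∧ Matrix.trace C = N} with hS
  set f : Matrix (Fin 2) (Fin 2) ℤ → ℤ × ℤ × ℤ :=
    fun C => (C 0 1, C 1 0, C 1 1 - C 0 0) with hf
  have hinj : Set.InjOn f S := by
    intro C hC D hD hfd
    have e : C 0 1 = D 0 1 ∧ C 1 0 = D 1 0 ∧ C 1 1 - C 0 0 = D 1 1 - D 0 0 := by
      simpa [hf, Prod.ext_iff] using hfd
    have tC := hC.2
    have tD := hD.2
    rw [Matrix.trace_fin_two] at tC tD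
    have e1 : C 0 0 = D 0 0 := by omega
    have e2 : C 1 1 = D 1 1 := by omega
    rw [Matrix.eta_fin_two C, Matrix.eta_fin_two D, e1, e2, e.1, e.2.1]
  have himg : f '' S =
      {p : ℤ × ℤ × ℤ | 0 < p.1 ∧ 0 < p.2.1 ∧ 4 * p.1 * p.2.1 + p.2.2 ^ 2 = N ^ 2 - 4} := by
    ext p
    constructor
    · rintro ⟨C, ⟨hmem, htr⟩, hfC⟩
      obtain ⟨hpos, hdet⟩ := mem_closure_nonneg_det C hmem
      have h00 := hpos 0 0; have h01 := hpos 0 1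
      have h10 := hpos 1 0; have h11 := hpos 1 1
      rw [Matrix.det_fin_two] at hdet
      rw [Matrix.trace_fin_two] at htr
      set a := C 0 0; set b := C 0 1; set c := C 1 0; set d := C 1 1
      have ha1 : 1 ≤ a := by
        by_contra h
        push_neg at h
        have : a = 0 := by omega
        rw [this] at hdet
        nlinarith
      have hd1 : 1 ≤ d := by
        by_contra h
        push_neg at h
        have : d = 0 := by omega
        rw [this] at hdet
        nlinarith
      have had : 2 ≤ a * d := by
        nlinarith [mul_nonneg (sub_nonneg.2 ha1) (sub_nonneg.2 hd1)]
      have hbc : 1 ≤ b * c := by nlinarith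
      have hb : 0 < b := by
        by_contra h
        push_neg at h
        have : b = 0 := by omega
        rw [this] at hbc
        simp at hbc
      have hc : 0 < c := by
        by_contra h
        push_neg at h
        have : c = 0 := by omega
        rw [this] at hbc
        simp at hbc
      rw [← hfC]
      refine ⟨hb, hc, ?_⟩
      show 4 * b * c + (d - a) ^ 2 = N ^ 2 - 4
      linear_combination (a + d + N) * htr - 4 * hdet
    · rintro ⟨hl, hm, heq⟩
      obtain ⟨l, μ, m⟩ := p
      simp only at hl hm heq ⊢
      -- parity: N - m is even
      have hpar : ∃ a : ℤ, 2 * a = N - m := by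
        rcases Int.even_or_odd (N - m) with ⟨k, hk⟩ | ⟨k, hk⟩
        · exact ⟨k, by omega⟩
        · exfalso
          have h3 : ∃ u v w : ℤ, 4 * u + 4 * v + 4 * k + 2 * m + 1 = 4 * w + 4 :=
            ⟨k * k, k * m, l * μ, by linear_combination (-1 : ℤ) * heq - (2 * k + 1 + N + m) * hk⟩
          obtain ⟨u, v, w, h3⟩ := h3
          omega
      obtain ⟨a, ha⟩ := hpar
      set d := N - a with hdd
      have hd2 : 2 * d = N + m := by omega
      have had : a * d = l * μ + 1 := by
        have h4 : 4 * (a * d) = 4 * (l * μ) + 4 := by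
          linear_combination (2 * d) * ha + (N - m) * hd2 - heq
        linarith
      have hlm : 1 ≤ l * μ := by nlinarith
      have ha0 : 0 < a := by
        by_contra h
        push_neg at h
        have hd0 : 0 < d := by omega
        nlinarith
      have hd0 : 0 < d := by
        by_contra h
        push_neg at h
        nlinarith
      refine ⟨!![a, l; μ, d], ⟨?_, ?_⟩, ?_⟩
      · apply nonneg_det_mem_closure (a + l + μ + d).toNat
        · intro i j
          fin_cases i <;> fin_cases j <;> simp <;> omega
        · rw [Matrix.det_fin_two]
          simp
          linarith
        · simp
      · rw [Matrix.trace_fin_two]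
        simp
        omega
      · simp [hf]
        omega
  rw [Phi, Upsilon, ← hS, ← himg, Set.ncard_image_of_injOn hinj]
end

section
/- For every integer N ≥ 3, Φ(N) = 2 · Σ_{n=1}^{N−1} d_n(nN − n² − 1), where the sum ranges over integers n with 1 ≤ n < N. -/
open Matrix

/-- `dLt n x` is the number of positive divisors of `x` that are strictly less
than the real number `n`. -/
noncomputable def dLt (n : ℝ) (x : ℕ) : ℕ :=
  {k : ℕ | k ∣ x ∧ 0 < k ∧ (k : ℝ) < n}.ncard

/-!
The monoid generated by `A` and `B` consists exactly of the nonnegative integer matrices of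
determinant one: such a matrix other than `1` has one row dominating the other entrywise, so it is
`A` or `B` times a matrix with smaller entry sum. A matrix of trace `N ≥ 3` in it is therefore
`!![n, k; c, N - n]` with `1 ≤ n < N` and `k c = m := n (N - n) - 1 > 0`, whence
`Φ(N) = ∑ₙ d(n (N - n) - 1)`. Since `m + 1 = n (N - n)`, the involution `k ↦ m / k` matches the
divisors of `m` that are at least `n` with those below `N - n`, and the reflection `n ↦ N - n`
shows that both halves of the sum agree.
-/

open Finset

lemma A_mul (a b c d : ℤ) : A * !![a, b; c, d] = !![a, b; a + c, b + d] := by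
  simp [A]

lemma B_mul (a b c d : ℤ) : B * !![a, b; c, d] = !![a + c, b + d; c, d] := by
  simp [B]

lemma nonneg_and_det_eq_one_of_mem_closure_AB {C : Matrix (Fin 2) (Fin 2) ℤ}
    (hC : C ∈ Submonoid.closure {A, B}) : (∀ i j, 0 ≤ C i j) ∧ C.det = 1 := by
  induction hC using Submonoid.closure_induction with
  | mem X hX =>
    rcases hX with rfl | rfl <;>
      exact ⟨fun i j => by fin_cases i <;> fin_cases j <;> simp [A, B],
        by simp [A, B, det_fin_two_of]⟩
  | one => exact ⟨fun i j => by fin_cases i <;> fin_cases j <;> simp, det_one⟩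
  | mul X Y _ _ hX hY =>
    refine ⟨fun i j => ?_, by rw [det_mul, hX.2, hY.2, one_mul]⟩
    rw [mul_apply]
    exact sum_nonneg fun k _ => mul_nonneg (hX.1 i k) (hY.1 k j)

theorem natMatrix_mem_closure_AB {a b c d : ℕ} (h : a * d = b * c + 1) :
    !![(a : ℤ), b; c, d] ∈ Submonoid.closure {A, B} := by
  induction hs : a + b + c + d using Nat.strong_induction_on generalizing a b c d with
  | _ s ih =>
  subst hs
  rcases le_or_gt a c with hac | hca
  · rcases le_or_gt b d with hbd | hdb
    · obtain ⟨c, rfl⟩ := Nat.exists_eq_add_of_le hac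
      obtain ⟨d, rfl⟩ := Nat.exists_eq_add_of_le hbd
      have ha : a ≠ 0 := by rintro rfl; simp at h
      have := ih _ (by omega) (show a * d = b * c + 1 by linarith) rfl
      push_cast
      rw [← A_mul]
      exact Submonoid.mul_mem _ (Submonoid.subset_closure (by simp)) this
    · -- a ≤ c and d < b would give a d ≤ b c
      nlinarith
  · rcases le_or_gt d b with hdb | hbd
    · obtain ⟨a, rfl⟩ := Nat.exists_eq_add_of_le hca.le
      obtain ⟨b, rfl⟩ := Nat.exists_eq_add_of_le hdb
      have hd : d ≠ 0 := by rintro rfl; simp at h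
      have := ih _ (by omega) (show a * d = b * c + 1 by linarith) rfl
      push_cast
      rw [add_comm (c : ℤ), add_comm (d : ℤ), ← B_mul]
      exact Submonoid.mul_mem _ (Submonoid.subset_closure (by simp)) this
    · -- c < a and b < d give (c + 1) (b + 1) ≤ a d = b c + 1
      obtain ⟨rfl, rfl⟩ : b = 0 ∧ c = 0 := by constructor <;> nlinarith
      obtain ⟨rfl, rfl⟩ : a = 1 ∧ d = 1 := by simpa using h
      simp [← one_fin_two]

theorem mem_closure_AB_iff {C : Matrix (Fin 2) (Fin 2) ℤ} :
    C ∈ Submonoid.closure {A, B} ↔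
      ∃ a b c d : ℕ, a * d = b * c + 1 ∧ C = !![(a : ℤ), b; c, d] := by
  refine ⟨fun hC => ?_, fun ⟨a, b, c, d, h, hC⟩ => hC ▸ natMatrix_mem_closure_AB h⟩
  obtain ⟨hnonneg, hdet⟩ := nonneg_and_det_eq_one_of_mem_closure_AB hC
  obtain ⟨a, ha⟩ := Int.eq_ofNat_of_zero_le (hnonneg 0 0)
  obtain ⟨b, hb⟩ := Int.eq_ofNat_of_zero_le (hnonneg 0 1)
  obtain ⟨c, hc⟩ := Int.eq_ofNat_of_zero_le (hnonneg 1 0)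
  obtain ⟨d, hd⟩ := Int.eq_ofNat_of_zero_le (hnonneg 1 1)
  rw [det_fin_two, ha, hb, hc, hd] at hdet
  exact ⟨a, b, c, d, by linarith, by rw [eta_fin_two C, ha, hb, hc, hd]⟩

lemma two_le_mul_of_three_le_add {a b : ℕ} (ha : a ≠ 0) (hb : b ≠ 0) (h : 3 ≤ a + b) :
    2 ≤ a * b := by
  obtain ⟨a, rfl⟩ := Nat.exists_eq_succ_of_ne_zero ha
  obtain ⟨b, rfl⟩ := Nat.exists_eq_succ_of_ne_zero hb
  nlinarith

lemma two_le_mul_sub {n N : ℕ} (hN : 3 ≤ N) (h1 : 1 ≤ n) (h2 : n < N) : 2 ≤ n * (N - n) :=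
  two_le_mul_of_three_le_add (by omega) (by omega) (by omega)

theorem setOf_mem_closure_AB_trace_eq {N : ℕ} (hN : 3 ≤ N) :
    {C | C ∈ Submonoid.closure {A, B} ∧ C.trace = (N : ℤ)} =
      ((Ico 1 N).sigma fun n => (n * (N - n) - 1).divisorsAntidiagonal).image
        (fun x => !![(x.1 : ℤ), x.2.1; x.2.2, (N - x.1 : ℕ)]) := by
  ext C
  simp only [Set.mem_ofPred_eq, coe_image, coe_sigma, Set.mem_image,
    Set.mem_sigma_iff, mem_coe, mem_Ico, Nat.mem_divisorsAntidiagonal]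
  rw [mem_closure_AB_iff]
  constructor
  · rintro ⟨⟨a, b, c, d, h, rfl⟩, htr⟩
    rw [trace_fin_two_of] at htr
    have had : a + d = N := by exact_mod_cast htr
    have ha : a ≠ 0 := by rintro rfl; simp at h
    have hd : d ≠ 0 := by rintro rfl; simp at h
    subst had
    refine ⟨⟨a, b, c⟩, ?_, by simp⟩
    simp only [Nat.add_sub_cancel_left]
    have := two_le_mul_of_three_le_add ha hd hN
    omega
  · rintro ⟨⟨n, k, c⟩, ⟨⟨h1, h2⟩, hkc, -⟩, rfl⟩
    dsimp only at h1 h2 hkc ⊢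
    have := two_le_mul_sub hN h1 h2
    refine ⟨⟨n, k, c, N - n, by omega, rfl⟩, ?_⟩
    simp [trace_fin_two]
    omega

theorem Phi_eq_sum_card_divisors {N : ℕ} (hN : 3 ≤ N) :
    Phi N = ∑ n ∈ Ico 1 N, #(n * (N - n) - 1).divisors := by
  rw [Phi, setOf_mem_closure_AB_trace_eq hN, Set.ncard_coe_finset, card_image_of_injective,
    card_sigma]
  · simp_rw [← Nat.map_div_right_divisors, card_map]
  · rintro ⟨n, k, c⟩ ⟨n', k', c'⟩ h
    have h00 := congrFun₂ h 0 0
    have h01 := congrFun₂ h 0 1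
    have h10 := congrFun₂ h 1 0
    simp only [of_apply, cons_val', cons_val_zero, cons_val_one, empty_val',
      cons_val_fin_one, Nat.cast_inj] at h00 h01 h10
    subst h00 h01 h10
    rfl

lemma card_divisors_eq_add {m a b : ℕ} (h : m + 1 = a * b) :
    #m.divisors = #{k ∈ m.divisors | k < a} + #{k ∈ m.divisors | k < b} := by
  rw [← card_filter_add_card_filter_not (· < a)]
  congr 1
  refine card_nbij' (m / ·) (m / ·) ?_ ?_ ?_ ?_
  · intro k hk
    simp only [coe_filter, Set.mem_ofPred_eq, Nat.mem_divisors, not_lt] at hk ⊢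
    obtain ⟨⟨hkm, hm⟩, hak⟩ := hk
    refine ⟨⟨Nat.div_dvd_of_dvd hkm, hm⟩, ?_⟩
    rw [Nat.div_lt_iff_lt_mul (Nat.pos_of_dvd_of_pos hkm (Nat.pos_of_ne_zero hm))]
    nlinarith
  · intro k hk
    simp only [coe_filter, Set.mem_ofPred_eq, Nat.mem_divisors, not_lt] at hk ⊢
    obtain ⟨⟨hkm, hm⟩, hkb⟩ := hk
    refine ⟨⟨Nat.div_dvd_of_dvd hkm, hm⟩, ?_⟩
    rw [Nat.le_div_iff_mul_le (Nat.pos_of_dvd_of_pos hkm (Nat.pos_of_ne_zero hm))]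
    nlinarith
  all_goals
    intro k hk
    simp only [coe_filter, Set.mem_ofPred_eq, Nat.mem_divisors] at hk
    exact Nat.div_div_self hk.1.1 hk.1.2

lemma dLt_natCast {x : ℕ} (hx : x ≠ 0) (n : ℕ) : dLt n x = #{k ∈ x.divisors | k < n} := by
  rw [dLt, ← Set.ncard_coe_finset]
  congr 1
  ext k
  simp only [Set.mem_ofPred_eq, coe_filter, Nat.mem_divisors, Nat.cast_lt, and_true, hx, ne_eq,
    not_false_eq_true]
  exact and_congr_right fun hk => and_iff_right (Nat.pos_of_dvd_of_pos hk (Nat.pos_of_ne_zero hx))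

theorem stmt1 (N : ℕ) (hN : 3 ≤ N) :
    Phi (N : ℤ) = 2 * ∑ n ∈ Finset.Ico 1 N, dLt (n : ℝ) (n * N - n ^ 2 - 1) := by
  let f j := #{k ∈ (j * (N - j) - 1).divisors | k < j}
  have hsplit : ∀ n ∈ Ico 1 N, #(n * (N - n) - 1).divisors = f n + f (N - n) := by
    intro n hn
    rw [mem_Ico] at hn
    have hsymm : (N - n) * (N - (N - n)) = n * (N - n) := by
      rw [Nat.sub_sub_self hn.2.le, mul_comm]
    have := two_le_mul_sub hN hn.1 hn.2
    simp only [f, hsymm]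
    exact card_divisors_eq_add (by omega)
  have hreflect : ∑ n ∈ Ico 1 N, f (N - n) = ∑ n ∈ Ico 1 N, f n := by
    simpa using sum_Ico_reflect f 1 (Nat.le_succ N)
  have hdLt : ∀ n ∈ Ico 1 N, dLt n (n * N - n ^ 2 - 1) = f n := by
    intro n hn
    rw [mem_Ico] at hn
    have := two_le_mul_sub hN hn.1 hn.2
    rw [sq, ← Nat.mul_sub, dLt_natCast (by omega)]
  rw [Phi_eq_sum_card_divisors hN, sum_congr rfl hsplit, sum_add_distrib, hreflect,
    sum_congr rfl hdLt, two_mul]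
end

section
/- If X is a positive integer that is a perfect square, then Υ(X) − 2 · Υ_<(X) = √X − 1. -/
open Matrix

noncomputable def UpsilonLt (X : ℤ) : ℕ :=
  {p : ℤ × ℤ × ℤ | 0 < p.1 ∧ 0 < p.2.1 ∧ 4 * p.1 * p.2.1 + p.2.2 ^ 2 = X ∧
    ((2 * p.1 - p.2.2 : ℤ) : ℝ) < Real.sqrt X}.ncard

namespace Stmt3Aux

def SS (n : ℤ) : Set (ℤ × ℤ × ℤ) :=
  {p | 0 < p.1 ∧ 0 < p.2.1 ∧ 4 * p.1 * p.2.1 + p.2.2 ^ 2 = n ^ 2}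

def AA (n : ℤ) : Set (ℤ × ℤ × ℤ) :=
  {p | 0 < p.1 ∧ 0 < p.2.1 ∧ 4 * p.1 * p.2.1 + p.2.2 ^ 2 = n ^ 2 ∧ 2 * p.1 - p.2.2 < n}

def TT (n : ℤ) : Set (ℤ × ℤ × ℤ) :=
  {p | 0 < p.1 ∧ 0 < p.2.1 ∧ 4 * p.1 * p.2.1 + p.2.2 ^ 2 = n ^ 2 ∧ n < 2 * p.1 - p.2.2}

def DD (n : ℤ) : Set (ℤ × ℤ × ℤ) :=
  {p | 0 < p.1 ∧ 0 < p.2.1 ∧ 4 * p.1 * p.2.1 + p.2.2 ^ 2 = n ^ 2 ∧ 2 * p.1 - p.2.2 = n}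

def ψ : ℤ × ℤ × ℤ → ℤ × ℤ × ℤ := fun p => (p.2.1, p.1, -p.2.2)

lemma ψ_inj : Function.Injective ψ := by
  rintro ⟨a, b, c⟩ ⟨a', b', c'⟩ h
  simp only [ψ, Prod.ext_iff] at h ⊢
  obtain ⟨h1, h2, h3⟩ := h
  exact ⟨h2, h1, by linarith⟩

lemma mlt (n l u m : ℤ) (hl : 0 < l) (hu : 0 < u) (heq : 4*l*u + m^2 = n^2)
    (hn : 1 ≤ n) : -n < m ∧ m < n := by
  constructor <;> nlinarith [mul_pos hl hu]

lemma flip1 (n l u m : ℤ) (hl : 0 < l) (hu : 0 < u) (heq : 4*l*u + m^2 = n^2)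
    (hn : 1 ≤ n) (h : 2*l - m < n) : n < 2*u + m := by
  obtain ⟨h1, h2⟩ := mlt n l u m hl hu heq hn
  have key : 2*l*(n-m) < 2*l*(2*u) := by nlinarith
  have : n - m < 2*u := by
    have := (mul_lt_mul_iff_right₀ (by linarith : (0:ℤ) < 2*l)).mp key
    linarith
  linarith

lemma flip2 (n l u m : ℤ) (hl : 0 < l) (hu : 0 < u) (heq : 4*l*u + m^2 = n^2)
    (hn : 1 ≤ n) (h : n < 2*l - m) : 2*u + m < n := by
  obtain ⟨h1, h2⟩ := mlt n l u m hl hu heq hn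
  have key : 2*l*(2*u) < 2*l*(n-m) := by nlinarith
  have : 2*u < n - m := by
    have := (mul_lt_mul_iff_right₀ (by linarith : (0:ℤ) < 2*l)).mp key
    linarith
  linarith

lemma eqcase (n l u m : ℤ) (hl : 0 < l) (hu : 0 < u) (heq : 4*l*u + m^2 = n^2)
    (h : 2*l - m = n) : u = n - l ∧ m = 2*l - n ∧ l < n := by
  have hm : m = 2*l - n := by linarith
  subst hm
  have h4 : 4*l*u = 4*l*(n-l) := by linear_combination heq
  have hu' : u = n - l := mul_left_cancel₀ (by nlinarith : (4*l:ℤ) ≠ 0) h4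
  exact ⟨hu', rfl, by nlinarith⟩

lemma finS (n : ℤ) (hn : 1 ≤ n) : (SS n).Finite := by
  apply Set.Finite.subset (Set.finite_Icc ((1:ℤ),(1:ℤ),(-(n^2):ℤ)) ((n^2:ℤ),(n^2:ℤ),(n^2:ℤ)))
  rintro ⟨l, u, m⟩ ⟨hl, hu, heq⟩
  simp only [Set.mem_Icc, Prod.mk_le_mk]
  have hmm : m^2 ≤ n^2 := by nlinarith
  refine ⟨⟨hl, hu, by nlinarith [sq_nonneg (m+1)]⟩, by nlinarith, by nlinarith,
    by nlinarith [sq_nonneg (m-1)]⟩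

lemma hT (n : ℤ) (hn : 1 ≤ n) : TT n = ψ '' AA n := by
  ext ⟨l, u, m⟩
  constructor
  · rintro ⟨hl, hu, heq, h⟩
    refine ⟨(u, l, -m), ⟨hu, hl, by ring_nf; ring_nf at heq; linarith, ?_⟩, ?_⟩
    · have := flip2 n l u m hl hu heq hn h
      simp only []
      linarith
    · simp [ψ]
  · rintro ⟨⟨a, b, c⟩, ⟨ha, hb, heq, h⟩, he⟩
    dsimp only at ha hb heq h
    rw [← he]
    show 0 < b ∧ 0 < a ∧ 4 * b * a + (-c) ^ 2 = n ^ 2 ∧ n < 2 * b - -c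
    have := flip1 n a b c ha hb heq hn h
    exact ⟨hb, ha, by linear_combination heq, by linarith⟩

lemma hD (n : ℤ) (hn : 1 ≤ n) : DD n = (fun l => (l, n - l, 2*l - n)) '' Set.Ioo 0 n := by
  ext ⟨l, u, m⟩
  constructor
  · rintro ⟨hl, hu, heq, h⟩
    obtain ⟨h1, h2, h3⟩ := eqcase n l u m hl hu heq h
    exact ⟨l, ⟨hl, h3⟩, by simp [h1, h2]⟩
  · rintro ⟨x, ⟨hx0, hxn⟩, he⟩
    rw [← he]
    exact ⟨hx0, by simpa using by linarith, by ring, by ring⟩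

lemma key (n : ℤ) (hn : 1 ≤ n) :
    (Upsilon (n^2) : ℤ) - 2 * (UpsilonLt (n^2) : ℤ) = n - 1 := by
  have hsqrt : Real.sqrt ((n^2 : ℤ) : ℝ) = (n : ℝ) := by
    push_cast
    exact Real.sqrt_sq (by exact_mod_cast (by linarith : (0:ℤ) ≤ n))
  have hfinS : (SS n).Finite := finS n hn
  have hsub_A : AA n ⊆ SS n := by rintro p ⟨h1, h2, h3, _⟩; exact ⟨h1, h2, h3⟩
  have hsub_T : TT n ⊆ SS n := by rintro p ⟨h1, h2, h3, _⟩; exact ⟨h1, h2, h3⟩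
  have hsub_D : DD n ⊆ SS n := by rintro p ⟨h1, h2, h3, _⟩; exact ⟨h1, h2, h3⟩
  have hfinA := hfinS.subset hsub_A
  have hfinT := hfinS.subset hsub_T
  have hfinD := hfinS.subset hsub_D
  have hSU : SS n = (AA n ∪ TT n) ∪ DD n := by
    ext ⟨l, u, m⟩
    constructor
    · rintro ⟨hl, hu, heq⟩
      rcases lt_trichotomy (2*l - m) n with h | h | h
      · exact Or.inl (Or.inl ⟨hl, hu, heq, h⟩)
      · exact Or.inr ⟨hl, hu, heq, h⟩
      · exact Or.inl (Or.inr ⟨hl, hu, heq, h⟩)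
    · rintro ((⟨hl, hu, heq, _⟩ | ⟨hl, hu, heq, _⟩) | ⟨hl, hu, heq, _⟩) <;> exact ⟨hl, hu, heq⟩
  have hdis1 : Disjoint (AA n) (TT n) := by
    rw [Set.disjoint_left]
    rintro p ⟨_, _, _, h⟩ ⟨_, _, _, h'⟩
    exact absurd h' (not_lt.2 h.le)
  have hdis2 : Disjoint (AA n ∪ TT n) (DD n) := by
    rw [Set.disjoint_left]
    rintro p (⟨_, _, _, h⟩ | ⟨_, _, _, h⟩) ⟨_, _, _, h'⟩ <;> omega
  have hcardT : (TT n).ncard = (AA n).ncard := by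
    rw [hT n hn, Set.ncard_image_of_injective _ ψ_inj]
  have hinj : Function.Injective (fun l : ℤ => (l, n - l, 2*l - n)) := by
    intro a b h
    simpa using congrArg Prod.fst h
  have hcardD : ((DD n).ncard : ℤ) = n - 1 := by
    rw [hD n hn, Set.ncard_image_of_injective _ hinj]
    rw [show Set.Ioo (0:ℤ) n = ↑(Finset.Ioo (0:ℤ) n) from (Finset.coe_Ioo 0 n).symm,
      Set.ncard_coe_finset, Int.card_Ioo]
    simp
    omega
  have hcardS : (SS n).ncard = (AA n).ncard + (TT n).ncard + (DD n).ncard := by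
    rw [hSU, Set.ncard_union_eq hdis2 (hfinA.union hfinT) hfinD,
      Set.ncard_union_eq hdis1 hfinA hfinT]
  have hU : Upsilon (n^2) = (SS n).ncard := rfl
  have hUL : UpsilonLt (n^2) = (AA n).ncard := by
    unfold UpsilonLt
    congr 1
    ext ⟨l, u, m⟩
    simp only [Set.mem_setOf_eq, hsqrt, AA]
    constructor
    · rintro ⟨h1, h2, h3, h4⟩
      exact ⟨h1, h2, h3, by exact_mod_cast h4⟩
    · rintro ⟨h1, h2, h3, h4⟩
      exact ⟨h1, h2, h3, by exact_mod_cast h4⟩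
  rw [hU, hUL, hcardS, hcardT]
  push_cast
  linarith [hcardD]

end Stmt3Aux

theorem stmt3 (X : ℕ) (hX : 0 < X) (hsq : IsSquare X) :
    (Upsilon (X : ℤ) : ℤ) - 2 * (UpsilonLt (X : ℤ) : ℤ) = (Nat.sqrt X : ℤ) - 1 := by
  obtain ⟨r, hr⟩ := hsq
  have hr1 : 1 ≤ r := by
    rcases Nat.eq_zero_or_pos r with h | h
    · subst h; simp [hr] at hX
    · exact h
  have hx : (X : ℤ) = (r : ℤ)^2 := by rw [hr]; push_cast; ring
  have hs : Nat.sqrt X = r := by rw [hr, Nat.sqrt_eq]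
  rw [hx, hs]
  exact Stmt3Aux.key (r : ℤ) (by exact_mod_cast hr1)
end

section
/- For every integer N ≥ 3, Φ(N) = 2 · Υ_<(N² − 4). -/
open Matrix

def Good (C : Matrix (Fin 2) (Fin 2) ℤ) : Prop :=
  0 ≤ C 0 0 ∧ 0 ≤ C 0 1 ∧ 0 ≤ C 1 0 ∧ 0 ≤ C 1 1 ∧
    C 0 0 * C 1 1 - C 0 1 * C 1 0 = 1

lemma mul_entry (C D : Matrix (Fin 2) (Fin 2) ℤ) (i j : Fin 2) :
    (C * D) i j = C i 0 * D 0 j + C i 1 * D 1 j := by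
  rw [Matrix.mul_apply, Fin.sum_univ_two]

lemma good_mul {C D : Matrix (Fin 2) (Fin 2) ℤ} (hC : Good C) (hD : Good D) :
    Good (C * D) := by
  obtain ⟨ha, hb, hc, hd, hdet⟩ := hC
  obtain ⟨ha', hb', hc', hd', hdet'⟩ := hD
  refine ⟨?_, ?_, ?_, ?_, ?_⟩ <;> simp only [mul_entry]
  · exact add_nonneg (mul_nonneg ha ha') (mul_nonneg hb hc')
  · exact add_nonneg (mul_nonneg ha hb') (mul_nonneg hb hd')
  · exact add_nonneg (mul_nonneg hc ha') (mul_nonneg hd hc')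
  · exact add_nonneg (mul_nonneg hc hb') (mul_nonneg hd hd')
  · linear_combination (D 0 0 * D 1 1 - D 0 1 * D 1 0) * hdet + hdet'

lemma good_A : Good A := by
  refine ⟨?_, ?_, ?_, ?_, ?_⟩ <;> norm_num [A]

lemma good_B : Good B := by
  refine ⟨?_, ?_, ?_, ?_, ?_⟩ <;> norm_num [B]

lemma good_one : Good (1 : Matrix (Fin 2) (Fin 2) ℤ) := by
  refine ⟨?_, ?_, ?_, ?_, ?_⟩ <;> norm_num [Matrix.one_apply]

lemma good_of_mem {C : Matrix (Fin 2) (Fin 2) ℤ}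
    (h : C ∈ Submonoid.closure {A, B}) : Good C := by
  induction h using Submonoid.closure_induction with
  | mem x hx =>
    rcases hx with rfl | rfl
    · exact good_A
    · exact good_B
  | one => exact good_one
  | mul x y hx hy px py => exact good_mul px py

lemma mem_of_good_aux : ∀ n : ℕ, ∀ C : Matrix (Fin 2) (Fin 2) ℤ, Good C →
    C 0 0 + C 0 1 + C 1 0 + C 1 1 ≤ (n : ℤ) → C ∈ Submonoid.closure {A, B} := by
  intro n
  induction n with
  | zero =>
    rintro C ⟨ha, hb, hc, hd, hdet⟩ hsum
    exfalso
    push_cast at hsum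
    have h1 : C 0 0 = 0 := by linarith
    have h2 : C 0 1 = 0 := by linarith
    rw [h1, h2] at hdet
    simp at hdet
  | succ n ih =>
    rintro C ⟨ha, hb, hc, hd, hdet⟩ hsum
    by_cases hI : C 0 0 = 1 ∧ C 0 1 = 0 ∧ C 1 0 = 0 ∧ C 1 1 = 1
    · have hC1 : C = 1 := by
        rw [Matrix.eta_fin_two C, hI.1, hI.2.1, hI.2.2.1, hI.2.2.2]
        rw [Matrix.one_fin_two]
      rw [hC1]; exact one_mem _
    · have hAmem : A ∈ Submonoid.closure ({A, B} : Set (Matrix (Fin 2) (Fin 2) ℤ)) :=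
        Submonoid.subset_closure (by simp)
      have hBmem : B ∈ Submonoid.closure ({A, B} : Set (Matrix (Fin 2) (Fin 2) ℤ)) :=
        Submonoid.subset_closure (by simp)
      have hcases : (C 0 0 ≤ C 1 0 ∧ C 0 1 ≤ C 1 1 ∧ 1 ≤ C 0 0 + C 0 1) ∨
          (C 1 0 ≤ C 0 0 ∧ C 1 1 ≤ C 0 1 ∧ 1 ≤ C 1 0 + C 1 1) := by
        by_cases h1 : C 0 0 ≤ C 1 0
        · by_cases h2 : C 0 1 ≤ C 1 1
          · left
            refine ⟨h1, h2, ?_⟩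
            by_contra hq
            push_neg at hq
            have e1 : C 0 0 = 0 := by linarith
            have e2 : C 0 1 = 0 := by linarith
            rw [e1, e2] at hdet; simp at hdet
          · push_neg at h2
            right
            have h1' : C 1 0 ≤ C 0 0 := by nlinarith
            refine ⟨h1', le_of_lt h2, ?_⟩
            by_contra hq
            push_neg at hq
            have e1 : C 1 0 = 0 := by linarith
            have e2 : C 1 1 = 0 := by linarith
            rw [e1, e2] at hdet; simp at hdet
        · push_neg at h1
          right
          have h2' : C 1 1 ≤ C 0 1 := by
            by_contra hq
            push_neg at hq
            have h5 : C 0 1 + C 1 0 ≤ 0 := by nlinarith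
            have e1 : C 0 1 = 0 := by linarith
            have e2 : C 1 0 = 0 := by linarith
            rw [e1, e2] at hdet
            have e3 : C 0 0 = 1 := by nlinarith
            have e4 : C 1 1 = 1 := by nlinarith
            exact hI ⟨e3, e1, e2, e4⟩
          refine ⟨le_of_lt h1, h2', ?_⟩
          by_contra hq
          push_neg at hq
          have e1 : C 1 0 = 0 := by linarith
          have e2 : C 1 1 = 0 := by linarith
          rw [e1, e2] at hdet; simp at hdet
      rcases hcases with ⟨h1, h2, h3⟩ | ⟨h1, h2, h3⟩
      · set D : Matrix (Fin 2) (Fin 2) ℤ :=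
          !![C 0 0, C 0 1; C 1 0 - C 0 0, C 1 1 - C 0 1] with hDdef
        have hCD : C = A * D := by
          rw [Matrix.eta_fin_two C]
          ext i j
          fin_cases i <;> fin_cases j <;>
            simp [A, hDdef, mul_entry] <;> ring
        have hD : D ∈ Submonoid.closure ({A, B} : Set (Matrix (Fin 2) (Fin 2) ℤ)) := by
          apply ih
          · refine ⟨?_, ?_, ?_, ?_, ?_⟩ <;> simp [hDdef] <;> linarith
          · have : D 0 0 + D 0 1 + D 1 0 + D 1 1 =
                C 1 0 + C 1 1 := by simp [hDdef]; ring
            rw [this]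
            push_cast at hsum ⊢
            linarith
        rw [hCD]; exact mul_mem hAmem hD
      · set D : Matrix (Fin 2) (Fin 2) ℤ :=
          !![C 0 0 - C 1 0, C 0 1 - C 1 1; C 1 0, C 1 1] with hDdef
        have hCD : C = B * D := by
          rw [Matrix.eta_fin_two C]
          ext i j
          fin_cases i <;> fin_cases j <;>
            simp [B, hDdef, mul_entry] <;> ring
        have hD : D ∈ Submonoid.closure ({A, B} : Set (Matrix (Fin 2) (Fin 2) ℤ)) := by
          apply ih
          · refine ⟨?_, ?_, ?_, ?_, ?_⟩ <;> simp [hDdef] <;> linarith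
          · have : D 0 0 + D 0 1 + D 1 0 + D 1 1 =
                C 0 0 + C 0 1 := by simp [hDdef]; ring
            rw [this]
            push_cast at hsum ⊢
            linarith
        rw [hCD]; exact mul_mem hBmem hD

lemma memClosureAB_iff (C : Matrix (Fin 2) (Fin 2) ℤ) :
    C ∈ Submonoid.closure {A, B} ↔ Good C := by
  constructor
  · exact good_of_mem
  · intro hG
    exact mem_of_good_aux (C 0 0 + C 0 1 + C 1 0 + C 1 1).toNat C hG (Int.self_le_toNat _)




lemma key_aux (X : ℤ) (hX5 : 5 ≤ X) (hXnotsq : ∀ k : ℤ, 2 ≤ k → k ^ 2 ≠ X)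
    (l mu m : ℤ) (hl : 0 < l) (hmu : 0 < mu) (heq : 4 * l * mu + m ^ 2 = X) :
    (((2 * l - m : ℤ) : ℝ) < Real.sqrt (X : ℝ)) ↔
      ¬ (((2 * mu - -m : ℤ) : ℝ) < Real.sqrt (X : ℝ)) := by
  set s : ℝ := Real.sqrt (X : ℝ) with hsdef
  have hs0 : 0 ≤ s := Real.sqrt_nonneg _
  have hspos : 0 < s := Real.sqrt_pos.mpr (by exact_mod_cast (by linarith : (0:ℤ) < X))
  have hs2 : s ^ 2 = (X : ℝ) := Real.sq_sqrt (by exact_mod_cast (by linarith : (0:ℤ) ≤ X))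
  clear_value s
  clear hsdef
  have hlR : (1 : ℝ) ≤ (l : ℝ) := by exact_mod_cast hl
  have hmuR : (1 : ℝ) ≤ (mu : ℝ) := by exact_mod_cast hmu
  have heqR : 4 * (l : ℝ) * mu + (m : ℝ) ^ 2 = (X : ℝ) := by exact_mod_cast heq
  have hne : l - mu - m ≠ 0 := by
    intro h
    exact hXnotsq (l + mu) (by linarith)
      (by linear_combination heq + (l - mu + m) * h)
  have hne1 : (1 : ℝ) ≤ ((l : ℝ) - mu - m) ^ 2 := by
    have h1 : 1 ≤ |l - mu - m| := Int.one_le_abs hne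
    have h2 : (1 : ℤ) ≤ (l - mu - m) ^ 2 := by
      calc (1:ℤ) = 1 * 1 := by ring
      _ ≤ |l - mu - m| * |l - mu - m| := mul_le_mul h1 h1 (by norm_num) (by linarith)
      _ = (l - mu - m) ^ 2 := by rw [← abs_mul, abs_mul_self]; ring
    exact_mod_cast h2
  have key : 4 * (l : ℝ) * mu + m * ((l:ℝ) - mu) < s * ((l : ℝ) + mu) := by
    rcases le_or_gt (4 * (l : ℝ) * mu + m * ((l:ℝ) - mu)) 0 with h | h
    · have : 0 < s * ((l : ℝ) + mu) := mul_pos hspos (by linarith)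
      linarith
    · have hsq : (4 * (l : ℝ) * mu + m * ((l:ℝ) - mu)) ^ 2 < (s * ((l : ℝ) + mu)) ^ 2 := by
        have hid : (X : ℝ) * ((l : ℝ) + mu) ^ 2
            - (4 * (l : ℝ) * mu + m * ((l:ℝ) - mu)) ^ 2
            = 4 * ((l : ℝ) * mu) * ((l:ℝ) - mu - m) ^ 2 := by
          rw [← heqR]; ring
        have hlm : (1 : ℝ) ≤ (l : ℝ) * mu := by nlinarith
        have h4 : (4 : ℝ) ≤ 4 * ((l : ℝ) * mu) * ((l:ℝ) - mu - m) ^ 2 := by nlinarith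
        have hexp : (s * ((l : ℝ) + mu)) ^ 2 = (X : ℝ) * ((l : ℝ) + mu) ^ 2 := by
          rw [mul_pow, hs2]
        rw [hexp]
        linarith
      exact lt_of_pow_lt_pow_left₀ 2 (mul_nonneg hs0 (by linarith)) hsq
  have hprod : ((2 * (l:ℝ) - m) - s) * ((2 * (mu:ℝ) + m) - s) < 0 := by
    have e : ((2 * (l:ℝ) - m) - s) * ((2 * (mu:ℝ) + m) - s)
        = (4 * (l:ℝ) * mu + 2 * (m * ((l:ℝ) - mu)) - m ^ 2) + s ^ 2
          - s * (2 * ((l:ℝ) + mu)) := by ring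
    rw [e, hs2, ← heqR]
    nlinarith [key]
  constructor
  · intro h hv
    push_cast at h hv
    nlinarith [hprod]
  · intro h
    push_cast at h ⊢
    push_neg at h
    nlinarith [hprod]

lemma surj_aux (N l mu m : ℤ) (hN : 3 ≤ N) (hl : 0 < l) (hmu : 0 < mu)
    (heq : 4 * l * mu + m ^ 2 = N ^ 2 - 4) :
    ∃ C : Matrix (Fin 2) (Fin 2) ℤ,
      (C ∈ Submonoid.closure {A, B} ∧ Matrix.trace C = N) ∧
        C 0 1 = l ∧ C 1 0 = mu ∧ C 0 0 - C 1 1 = m := by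
  have hEven : Even (N - m) := by
    have h2 : Even (N ^ 2 - m ^ 2) := ⟨2 * (l * mu) + 2, by linear_combination -heq⟩
    have h3 : Even (N ^ 2) ↔ Even (m ^ 2) := Int.even_sub.mp h2
    have h4 : Even N ↔ Even m := by
      rw [Int.even_pow' (by norm_num), Int.even_pow' (by norm_num)] at h3
      exact h3
    exact Int.even_sub.mpr h4
  obtain ⟨t, ht⟩ := hEven
  have hmsq : m ^ 2 < N ^ 2 := by nlinarith
  have hmlt : m < N := by nlinarith
  have hmgt : -N < m := by nlinarith
  have htpos : 0 < t := by linarith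
  have hatpos : 0 < N - t := by linarith
  have hm : m = N - 2 * t := by linarith
  have hdet4 : 4 * ((N - t) * t - l * mu) = 4 * 1 := by
    rw [hm] at heq
    linear_combination -heq
  have hdet : (N - t) * t - l * mu = 1 :=
    mul_left_cancel₀ (by norm_num : (4:ℤ) ≠ 0) hdet4
  refine ⟨!![N - t, l; mu, t], ⟨?_, ?_⟩, ?_, ?_, ?_⟩
  · rw [memClosureAB_iff]
    refine ⟨?_, ?_, ?_, ?_, ?_⟩
    · show (0:ℤ) ≤ N - t
      linarith
    · show (0:ℤ) ≤ l
      linarith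
    · show (0:ℤ) ≤ mu
      linarith
    · show (0:ℤ) ≤ t
      linarith
    · show (N - t) * t - l * mu = 1
      linarith [hdet]
  · rw [Matrix.trace_fin_two]
    show N - t + t = N
    ring
  · rfl
  · rfl
  · show N - t - t = m
    linarith

lemma mapsto_aux (N : ℤ) (hN : 3 ≤ N) (C : Matrix (Fin 2) (Fin 2) ℤ)
    (hG : Good C) (htr : C 0 0 + C 1 1 = N) :
    0 < C 0 1 ∧ 0 < C 1 0 ∧
      4 * C 0 1 * C 1 0 + (C 0 0 - C 1 1) ^ 2 = N ^ 2 - 4 := by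
  obtain ⟨ha, hb, hc, hd, hdet⟩ := hG
  have had : C 0 1 = 0 ∨ C 1 0 = 0 → False := by
    intro hor
    have had : C 0 0 * C 1 1 = 1 := by
      rcases hor with h | h <;> rw [h] at hdet <;> linarith [hdet]
    rcases Int.mul_eq_one_iff_eq_one_or_neg_one.mp had with ⟨e1, e2⟩ | ⟨e1, e2⟩ <;>
      rw [e1, e2] at htr <;> linarith
  have hbpos : 0 < C 0 1 := by
    rcases lt_or_eq_of_le hb with h | h
    · exact h
    · exact absurd (Or.inl h.symm) had
  have hcpos : 0 < C 1 0 := by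
    rcases lt_or_eq_of_le hc with h | h
    · exact h
    · exact absurd (Or.inr h.symm) had
  exact ⟨hbpos, hcpos, by linear_combination (C 0 0 + C 1 1 + N) * htr - 4 * hdet⟩

theorem stmt4 (N : ℤ) (hN : 3 ≤ N) : Phi N = 2 * UpsilonLt (N ^ 2 - 4) := by
  obtain ⟨X, hXdef⟩ : ∃ X : ℤ, X = N ^ 2 - 4 := ⟨_, rfl⟩
  have hX5 : 5 ≤ X := by rw [hXdef]; nlinarith
  have hXnotsq : ∀ k : ℤ, 2 ≤ k → k ^ 2 ≠ X := by
    intro k hk h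
    rw [hXdef] at h
    rcases le_or_gt k (N - 1) with h' | h' <;> nlinarith
  obtain ⟨T, hTdef⟩ : ∃ T : Set (ℤ × ℤ × ℤ),
      T = {p | 0 < p.1 ∧ 0 < p.2.1 ∧ 4 * p.1 * p.2.1 + p.2.2 ^ 2 = X} := ⟨_, rfl⟩
  obtain ⟨cond, hconddef⟩ : ∃ cond : ℤ × ℤ × ℤ → Prop,
      cond = fun p => ((2 * p.1 - p.2.2 : ℤ) : ℝ) < Real.sqrt (X : ℝ) := ⟨_, rfl⟩
  obtain ⟨g, hgdef⟩ : ∃ g : ℤ × ℤ × ℤ → ℤ × ℤ × ℤ,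
      g = fun p => (p.2.1, p.1, -p.2.2) := ⟨_, rfl⟩
  have hkey : ∀ p ∈ T, (cond p ↔ ¬ cond (g p)) := by
    rintro ⟨l, mu, m⟩ hp
    rw [hTdef] at hp
    obtain ⟨hl, hmu, heq⟩ := hp
    simp only at hl hmu heq
    simp only [hconddef, hgdef]
    exact key_aux X hX5 hXnotsq l mu m hl hmu heq
  have hsub : T ⊆ Set.Icc 1 X ×ˢ Set.Icc 1 X ×ˢ Set.Icc (-X) X := by
    rintro ⟨l, mu, m⟩ hp
    rw [hTdef] at hp
    obtain ⟨hl, hmu, heq⟩ := hp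
    simp only at hl hmu heq
    have hmsq : m ^ 2 ≤ X - 4 := by nlinarith
    have hm1 : 0 ≤ m * (m - 1) := by
      rcases le_or_gt m 0 with h | h <;> nlinarith
    have hm2 : 0 ≤ (-m) * ((-m) - 1) := by
      rcases le_or_gt m 0 with h | h <;> nlinarith
    refine ⟨⟨hl, by nlinarith⟩, ⟨hmu, by nlinarith⟩, by nlinarith, by nlinarith⟩
  have hTfin : T.Finite :=
    ((Set.finite_Icc (1:ℤ) X).prod
      ((Set.finite_Icc (1:ℤ) X).prod (Set.finite_Icc (-X) X))).subset hsub
  clear hsub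
  obtain ⟨Tlt, hTltdef⟩ : ∃ U : Set (ℤ × ℤ × ℤ), U = {p | p ∈ T ∧ cond p} := ⟨_, rfl⟩
  obtain ⟨Tgt, hTgtdef⟩ : ∃ U : Set (ℤ × ℤ × ℤ), U = {p | p ∈ T ∧ ¬ cond p} := ⟨_, rfl⟩
  have hTltsub : Tlt ⊆ T := by rw [hTltdef]; exact fun p hp => hp.1
  have hTgtsub : Tgt ⊆ T := by rw [hTgtdef]; exact fun p hp => hp.1
  have hgT : ∀ p ∈ T, g p ∈ T := by
    rintro ⟨l, mu, m⟩ hp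
    rw [hTdef] at hp ⊢
    obtain ⟨hl, hmu, heq⟩ := hp
    simp only at hl hmu heq
    rw [hgdef]
    exact ⟨hmu, hl, by simp only; linear_combination heq⟩
  have hgg : ∀ p : ℤ × ℤ × ℤ, g (g p) = p := by
    rintro ⟨l, mu, m⟩; rw [hgdef]; simp
  have hginj : Function.Injective g := by
    intro a b h
    have h2 := congrArg g h
    rwa [hgg, hgg] at h2
  have hgt_eq : Tgt = g '' Tlt := by
    rw [hTltdef, hTgtdef]
    ext q
    constructor
    · rintro ⟨hqT, hqc⟩
      refine ⟨g q, ⟨hgT q hqT, ?_⟩, hgg q⟩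
      have h2 := hkey (g q) (hgT q hqT)
      rw [hgg q] at h2
      exact h2.mpr hqc
    · rintro ⟨p, ⟨hpT, hpc⟩, rfl⟩
      exact ⟨hgT p hpT, (hkey p hpT).mp hpc⟩
  have hsplit : T = Tlt ∪ Tgt := by
    rw [hTltdef, hTgtdef]
    ext p
    simp only [Set.mem_union, Set.mem_setOf_eq]
    tauto
  have hdisj : Disjoint Tlt Tgt := by
    rw [Set.disjoint_left, hTltdef, hTgtdef]
    rintro p ⟨_, hc⟩ ⟨_, hnc⟩
    exact hnc hc
  have hTcard : T.ncard = 2 * Tlt.ncard := by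
    rw [hsplit, Set.ncard_union_eq hdisj (hTfin.subset hTltsub) (hTfin.subset hTgtsub),
      hgt_eq, Set.ncard_image_of_injective _ hginj]
    ring
  clear hkey hgT hgg hginj hgt_eq hsplit hdisj hTfin hTltsub hTgtsub hTgtdef
  obtain ⟨S, hSdef⟩ : ∃ S : Set (Matrix (Fin 2) (Fin 2) ℤ),
      S = {C | C ∈ Submonoid.closure {A, B} ∧ Matrix.trace C = N} := ⟨_, rfl⟩
  obtain ⟨f, hfdef⟩ : ∃ f : Matrix (Fin 2) (Fin 2) ℤ → ℤ × ℤ × ℤ,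
      f = fun C => (C 0 1, C 1 0, C 0 0 - C 1 1) := ⟨_, rfl⟩
  have hmem : ∀ C ∈ S, Good C ∧ C 0 0 + C 1 1 = N := by
    intro C hC
    rw [hSdef] at hC
    obtain ⟨hcl, htr⟩ := hC
    refine ⟨good_of_mem hcl, ?_⟩
    rw [Matrix.trace_fin_two] at htr
    exact htr
  have hBij : Set.BijOn f S T := by
    refine ⟨?_, ?_, ?_⟩
    · rintro C hC
      obtain ⟨hG, htr⟩ := hmem C hC
      obtain ⟨h1, h2, h3⟩ := mapsto_aux N hN C hG htr
      rw [hTdef, hfdef]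
      exact ⟨h1, h2, by rw [hXdef]; exact h3⟩
    · rintro C1 hC1 C2 hC2 hf
      obtain ⟨_, htr1⟩ := hmem C1 hC1
      obtain ⟨_, htr2⟩ := hmem C2 hC2
      rw [hfdef] at hf
      simp only [Prod.mk.injEq] at hf
      obtain ⟨e1, e2, e3⟩ := hf
      have e4 : C1 0 0 = C2 0 0 := by linarith
      have e5 : C1 1 1 = C2 1 1 := by linarith
      rw [Matrix.eta_fin_two C1, Matrix.eta_fin_two C2, e1, e2, e4, e5]
    · rintro ⟨l, mu, m⟩ hp
      rw [hTdef] at hp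
      obtain ⟨hl, hmu, heq⟩ := hp
      simp only at hl hmu heq
      rw [hXdef] at heq
      obtain ⟨C, hC, e1, e2, e3⟩ := surj_aux N l mu m hN hl hmu heq
      refine ⟨C, ?_, ?_⟩
      · rw [hSdef]; exact hC
      · rw [hfdef]
        simp only [e1, e2, e3]
  have hST : S.ncard = T.ncard := by
    rw [← hBij.image_eq, Set.ncard_image_of_injOn hBij.injOn]
  have hPhi : Phi N = S.ncard := by rw [hSdef]; rfl
  have hUps : UpsilonLt (N ^ 2 - 4) = Tlt.ncard := by
    unfold UpsilonLt
    congr 1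
    rw [hTltdef, hTdef, hconddef]
    ext p
    simp only [Set.mem_setOf_eq, ← hXdef]
    tauto
  rw [hPhi, hST, hTcard, hUps]
end

section
/- For every integer N ≥ 3, (1/2)·Φ(N) equals the number of pairs (q, q') of integers with 1 ≤ q < q' < N, gcd(q, q') = 1 and q' + inv_q(q') = N, plus the number of triples (q, p, t) of integers with 1 ≤ p < q < N, t ≥ 1, gcd(p, q) = 1 and q + inv_p(q) + p·t = N. -/
open Matrix

/-- For coprime positive `m`, `x`, this is the unique `y ∈ {1, …, m}` with
`x * y ≡ 1 [MOD m]`. -/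
def invMod (m x : ℕ) : ℕ := if m = 1 then 1 else ((x : ZMod m)⁻¹).val

lemma invMod_eq (m x a : ℕ) (ha1 : 1 ≤ a) (ham : a ≤ m) (h : x * a ≡ 1 [MOD m]) :
    invMod m x = a := by
  unfold invMod
  by_cases hm1 : m = 1
  · simp [hm1]; omega
  · simp only [hm1, if_false]
    have hm2 : 2 ≤ m := by
      rcases Nat.lt_or_ge m 2 with h2 | h2
      · interval_cases m
        · simp [Nat.ModEq] at h; omega
        · omega
      · exact h2
    haveI : NeZero m := ⟨by omega⟩
    have ham' : a < m := by
      rcases eq_or_lt_of_le ham with rfl | h'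
      · exfalso
        have h1 : x * a ≡ 0 [MOD a] := (Nat.modEq_zero_iff_dvd).2 ⟨x, by ring⟩
        have h2 := (Nat.modEq_zero_iff_dvd).1 (h.symm.trans h1)
        have := Nat.le_of_dvd one_pos h2
        omega
      · exact h'
    have hcast : ((x : ZMod m) * (a : ZMod m)) = 1 := by
      have := (ZMod.natCast_eq_natCast_iff (x * a) 1 m).2 h
      push_cast at this
      simpa using this
    rw [ZMod.inv_eq_of_mul_eq_one m _ _ hcast, ZMod.val_cast_of_lt ham']

lemma invMod_spec (m x : ℕ) (hm : 1 ≤ m) (h : Nat.gcd x m = 1) :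
    1 ≤ invMod m x ∧ invMod m x ≤ m ∧ x * invMod m x ≡ 1 [MOD m] := by
  unfold invMod
  by_cases hm1 : m = 1
  · subst hm1
    refine ⟨by simp, by simp, ?_⟩
    simp [Nat.ModEq, Nat.mod_one]
  · simp only [hm1, if_false]
    have hm2 : 2 ≤ m := by omega
    haveI : NeZero m := ⟨by omega⟩
    haveI : Fact (1 < m) := ⟨by omega⟩
    have hgcd : ((x : ZMod m)).val.gcd m = 1 := by
      rw [ZMod.val_natCast, ← Nat.gcd_rec, Nat.gcd_comm]
      exact h
    have hmul : (x : ZMod m) * (x : ZMod m)⁻¹ = 1 := by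
      rw [ZMod.mul_inv_eq_gcd, hgcd]; simp
    set y := ((x : ZMod m)⁻¹).val with hy
    have hcasty : ((y : ℕ) : ZMod m) = (x : ZMod m)⁻¹ := ZMod.natCast_rightInverse _
    have hylt : y < m := ZMod.val_lt _
    have hy1 : 1 ≤ y := by
      rcases Nat.eq_zero_or_pos y with h0 | h0
      · exfalso
        rw [h0] at hcasty
        simp only [Nat.cast_zero] at hcasty
        rw [← hcasty, mul_zero] at hmul
        exact one_ne_zero hmul.symm
      · exact h0
    refine ⟨hy1, le_of_lt hylt, ?_⟩
    have : ((x * y : ℕ) : ZMod m) = ((1 : ℕ) : ZMod m) := by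
      push_cast
      rw [hcasty]
      simpa using hmul
    exact (ZMod.natCast_eq_natCast_iff _ _ _).1 this


lemma key_ind : ∀ n : ℕ, ∀ a b c d : ℤ, 0 ≤ a → 0 ≤ b → 0 ≤ c → 0 ≤ d →
    a * d - b * c = 1 → a + b + c + d ≤ (n : ℤ) →
    !![a, b; c, d] ∈ Submonoid.closure {A, B} := by
  intro n
  induction n with
  | zero =>
    intro a b c d ha hb hc hd hdet hsum
    exfalso
    have : a = 0 ∧ b = 0 ∧ c = 0 ∧ d = 0 := by omega
    obtain ⟨rfl, rfl, rfl, rfl⟩ := this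
    simp at hdet
  | succ n ih =>
    intro a b c d ha hb hc hd hdet hsum
    by_cases h1 : a ≤ c ∧ b ≤ d
    · obtain ⟨h1a, h1b⟩ := h1
      have hab : 1 ≤ a + b := by
        by_contra h
        push_neg at h
        have : a = 0 ∧ b = 0 := by omega
        obtain ⟨rfl, rfl⟩ := this
        simp at hdet
      have hmem : !![a, b; c - a, d - b] ∈ Submonoid.closure {A, B} := by
        apply ih a b (c - a) (d - b) ha hb (by omega) (by omega) (by ring_nf; linarith [hdet]) (by omega)
      have heq : !![a, b; c, d] = A * !![a, b; c - a, d - b] := by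
        rw [A, Matrix.mul_fin_two]
        congr 1 <;> ring
      rw [heq]
      exact Submonoid.mul_mem _ (Submonoid.subset_closure (by simp)) hmem
    · by_cases h2 : c ≤ a ∧ d ≤ b
      · obtain ⟨h2a, h2b⟩ := h2
        have hcd : 1 ≤ c + d := by
          by_contra h
          push_neg at h
          have : c = 0 ∧ d = 0 := by omega
          obtain ⟨rfl, rfl⟩ := this
          simp at hdet
        have hmem : !![a - c, b - d; c, d] ∈ Submonoid.closure {A, B} := by
          apply ih (a - c) (b - d) c d (by omega) (by omega) hc hd (by ring_nf; linarith [hdet]) (by omega)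
        have heq : !![a, b; c, d] = B * !![a - c, b - d; c, d] := by
          rw [B, Matrix.mul_fin_two]
          congr 1 <;> ring
        rw [heq]
        exact Submonoid.mul_mem _ (Submonoid.subset_closure (by simp)) hmem
      · push_neg at h1 h2
        -- mixed cases
        rcases le_or_gt a c with hac | hac
        · -- a ≤ c, so b > d (from h1), and from h2: if c ≤ a then d > b; here a ≤ c
          have hbd : d < b := h1 hac
          -- case a < c ∧ d < b : det ≤ -(a+d+1) < 0, contradiction; a = c also bad
          exfalso
          rcases eq_or_lt_of_le hac with rfl | hac'
          ·
            have := h2 (le_refl a)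
            omega
          · nlinarith
        · -- c < a; from h2: ¬(d ≤ b) i.e. b < d
          have hbd : b < d := by
            have := h2 (le_of_lt hac)
            omega
          -- a > c, b < d: det ≥ b + c + 1, so b = c = 0, a*d = 1, matrix = 1
          have h3 : (c+1)*(b+1) ≤ a*d := by
            apply mul_le_mul (by omega) (by omega) (by omega) (by omega)
          have hb0 : b = 0 := by nlinarith
          have hc0 : c = 0 := by nlinarith
          subst hb0; subst hc0
          have : a = 1 ∧ d = 1 := by
            constructor <;> nlinarith
          obtain ⟨rfl, rfl⟩ := this
          have : !![(1:ℤ), 0; 0, 1] = (1 : Matrix (Fin 2) (Fin 2) ℤ) := by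
            ext i j
            fin_cases i <;> fin_cases j <;> simp [Matrix.one_apply]
          rw [this]
          exact Submonoid.one_mem _

lemma memClosureAB (C : Matrix (Fin 2) (Fin 2) ℤ) :
    C ∈ Submonoid.closure {A, B} ↔
      (0 ≤ C 0 0 ∧ 0 ≤ C 0 1 ∧ 0 ≤ C 1 0 ∧ 0 ≤ C 1 1) ∧ C.det = 1 := by
  constructor
  · intro h
    induction h using Submonoid.closure_induction with
    | mem x hx =>
      rcases hx with rfl | rfl
      · refine ⟨?_, ?_⟩
        · rw [A]; norm_num
        · rw [A, Matrix.det_fin_two_of]; norm_num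
      · refine ⟨?_, ?_⟩
        · rw [B]; norm_num
        · rw [B, Matrix.det_fin_two_of]; norm_num
    | one =>
      refine ⟨?_, Matrix.det_one⟩
      norm_num [Matrix.one_apply]
    | mul x y hx hy ihx ihy =>
      obtain ⟨⟨hx00, hx01, hx10, hx11⟩, hxdet⟩ := ihx
      obtain ⟨⟨hy00, hy01, hy10, hy11⟩, hydet⟩ := ihy
      refine ⟨?_, by rw [Matrix.det_mul, hxdet, hydet, one_mul]⟩
      have hmul : ∀ i j, (x * y) i j = x i 0 * y 0 j + x i 1 * y 1 j := by
        intro i j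
        rw [Matrix.mul_apply, Fin.sum_univ_two]
      refine ⟨?_, ?_, ?_, ?_⟩ <;> rw [hmul] <;> positivity
  · rintro ⟨⟨h00, h01, h10, h11⟩, hdet⟩
    rw [Matrix.eta_fin_two C]
    have hdet' : C 0 0 * C 1 1 - C 0 1 * C 1 0 = 1 := by
      rw [Matrix.det_fin_two] at hdet
      exact hdet
    exact key_ind (C 0 0 + C 0 1 + C 1 0 + C 1 1).toNat _ _ _ _ h00 h01 h10 h11 hdet' (by omega)

-- quadruple (a, b, c, d) = (x.1, x.2.1, x.2.2.1, x.2.2.2)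
def QuadSet (N : ℕ) : Set (ℕ × ℕ × ℕ × ℕ) :=
  {x | x.1 * x.2.2.2 = x.2.1 * x.2.2.1 + 1 ∧ x.1 + x.2.2.2 = N}

lemma quad_facts {N : ℕ} (hN : 3 ≤ N) {a b c d : ℕ} (hx : (a, b, c, d) ∈ QuadSet N) :
    1 ≤ a ∧ 1 ≤ b ∧ 1 ≤ c ∧ 1 ≤ d := by
  obtain ⟨hdet, htr⟩ := hx
  simp only at hdet htr
  have ha : 1 ≤ a := by
    rcases Nat.eq_zero_or_pos a with rfl | h
    · simp at hdet
    · exact h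
  have hd : 1 ≤ d := by
    rcases Nat.eq_zero_or_pos d with rfl | h
    · simp at hdet
    · exact h
  have had : 2 ≤ a * d := by nlinarith
  have hbc : 1 ≤ b * c := by omega
  have hb : 1 ≤ b := by
    rcases Nat.eq_zero_or_pos b with rfl | h
    · simp at hbc
    · exact h
  have hc : 1 ≤ c := by
    rcases Nat.eq_zero_or_pos c with rfl | h
    · simp at hbc
    · exact h
  exact ⟨ha, hb, hc, hd⟩

-- exactly-one lemma
lemma quad_xor {N : ℕ} (hN : 3 ≤ N) {a b c d : ℕ} (hx : (a, b, c, d) ∈ QuadSet N) :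
    (c < d ↔ ¬ b < a) := by
  obtain ⟨h1, h2, h3, h4⟩ := quad_facts hN hx
  obtain ⟨hdet, htr⟩ := hx
  simp only at hdet htr
  constructor
  · intro hcd hba
    nlinarith
  · intro hba
    push_neg at hba
    by_contra hcd
    push_neg at hcd
    nlinarith

lemma quad_gcd {N : ℕ} {a b c d : ℕ} (hx : (a, b, c, d) ∈ QuadSet N) :
    Nat.gcd d c = 1 := by
  obtain ⟨hdet, htr⟩ := hx
  simp only at hdet htr
  have h1 : Nat.gcd d c ∣ b * c := Dvd.dvd.mul_left (Nat.gcd_dvd_right d c) b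
  have h2 : Nat.gcd d c ∣ a * d := Dvd.dvd.mul_left (Nat.gcd_dvd_left d c) a
  have h3 : Nat.gcd d c ∣ 1 := by
    have := Nat.dvd_sub h2 h1
    rwa [hdet, Nat.add_sub_cancel_left] at this
  exact Nat.dvd_one.mp h3

def Fm (C : Matrix (Fin 2) (Fin 2) ℤ) : ℕ × ℕ × ℕ × ℕ :=
  ((C 0 0).toNat, (C 0 1).toNat, (C 1 0).toNat, (C 1 1).toNat)

lemma phi_eq_quad (N : ℕ) : Phi (N : ℤ) = (QuadSet N).ncard := by
  set S : Set (Matrix (Fin 2) (Fin 2) ℤ) :=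
    {C | C ∈ Submonoid.closure {A, B} ∧ Matrix.trace C = (N : ℤ)} with hS
  have hinj : Set.InjOn Fm S := by
    rintro C ⟨hC, _⟩ D ⟨hD, _⟩ h
    obtain ⟨⟨hC00, hC01, hC10, hC11⟩, _⟩ := (memClosureAB C).1 hC
    obtain ⟨⟨hD00, hD01, hD10, hD11⟩, _⟩ := (memClosureAB D).1 hD
    unfold Fm at h
    simp only [Prod.mk.injEq] at h
    obtain ⟨h1, h2, h3, h4⟩ := h
    have e1 : C 0 0 = D 0 0 := by omega
    have e2 : C 0 1 = D 0 1 := by omega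
    have e3 : C 1 0 = D 1 0 := by omega
    have e4 : C 1 1 = D 1 1 := by omega
    rw [Matrix.eta_fin_two C, Matrix.eta_fin_two D, e1, e2, e3, e4]
  have himg : Fm '' S = QuadSet N := by
    ext x
    constructor
    · rintro ⟨C, ⟨hC, htr⟩, rfl⟩
      obtain ⟨⟨h00, h01, h10, h11⟩, hdet⟩ := (memClosureAB C).1 hC
      rw [Matrix.det_fin_two] at hdet
      rw [Matrix.trace_fin_two] at htr
      constructor
      · show (C 0 0).toNat * (C 1 1).toNat = (C 0 1).toNat * (C 1 0).toNat + 1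
        have : (((C 0 0).toNat * (C 1 1).toNat : ℕ) : ℤ)
            = (((C 0 1).toNat * (C 1 0).toNat + 1 : ℕ) : ℤ) := by
          push_cast
          rw [Int.toNat_of_nonneg h00, Int.toNat_of_nonneg h01,
            Int.toNat_of_nonneg h10, Int.toNat_of_nonneg h11]
          linarith
        exact_mod_cast this
      · show (C 0 0).toNat + (C 1 1).toNat = N
        have : (((C 0 0).toNat + (C 1 1).toNat : ℕ) : ℤ) = (N : ℤ) := by
          push_cast
          rw [Int.toNat_of_nonneg h00, Int.toNat_of_nonneg h11]
          linarith
        exact_mod_cast this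
    · rintro ⟨hdet, htr⟩
      obtain ⟨a, b, c, d⟩ := x
      simp only at hdet htr
      refine ⟨!![(a : ℤ), b; c, d], ⟨?_, ?_⟩, ?_⟩
      · rw [memClosureAB]
        refine ⟨⟨by simp, by simp, by simp, by simp⟩, ?_⟩
        rw [Matrix.det_fin_two_of]
        have : (a : ℤ) * d = (b : ℤ) * c + 1 := by exact_mod_cast hdet
        linarith
      · rw [Matrix.trace_fin_two]
        have h1 : !![(a : ℤ), b; c, d] 0 0 = (a : ℤ) := by simp
        have h2 : !![(a : ℤ), b; c, d] 1 1 = (d : ℤ) := by simp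
        rw [h1, h2]
        exact_mod_cast htr
      · unfold Fm
        simp [Int.toNat_natCast]
  rw [Phi, ← hS, ← himg, Set.ncard_image_of_injOn hinj]

lemma quad_finite (N : ℕ) (hN : 3 ≤ N) : (QuadSet N).Finite := by
  apply Set.Finite.subset (Set.finite_Icc ((0:ℕ), (0:ℕ), (0:ℕ), (0:ℕ)) (N, N*N, N*N, N))
  rintro ⟨a, b, c, d⟩ hx
  obtain ⟨ha, hb, hc, hd⟩ := quad_facts hN hx
  obtain ⟨hdet, htr⟩ := hx
  simp only at hdet htr
  have hbN : b ≤ N * N := by nlinarith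
  have hcN : c ≤ N * N := by nlinarith
  simp only [Set.mem_Icc, Prod.le_def]
  omega

def Q1 (N : ℕ) : Set (ℕ × ℕ × ℕ × ℕ) := {x ∈ QuadSet N | x.2.2.1 < x.2.2.2}
def Q2 (N : ℕ) : Set (ℕ × ℕ × ℕ × ℕ) := {x ∈ QuadSet N | x.2.1 < x.1}

def sig (x : ℕ × ℕ × ℕ × ℕ) : ℕ × ℕ × ℕ × ℕ := (x.2.2.2, x.2.2.1, x.2.1, x.1)

lemma quad_card (N : ℕ) (hN : 3 ≤ N) : (QuadSet N).ncard = 2 * (Q1 N).ncard := by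
  have hQ1sub : Q1 N ⊆ QuadSet N := fun x hx => hx.1
  have hQ2sub : Q2 N ⊆ QuadSet N := fun x hx => hx.1
  have hfin := quad_finite N hN
  have hfin1 : (Q1 N).Finite := hfin.subset hQ1sub
  have hfin2 : (Q2 N).Finite := hfin.subset hQ2sub
  have hsig_mem : ∀ x, x ∈ QuadSet N → sig x ∈ QuadSet N := by
    rintro ⟨a, b, c, d⟩ ⟨hdet, htr⟩
    simp only at hdet htr
    refine ⟨?_, by simp [sig]; omega⟩
    show d * a = c * b + 1
    calc d * a = a * d := by ring
      _ = b * c + 1 := hdet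
      _ = c * b + 1 := by ring
  have himg : sig '' Q1 N = Q2 N := by
    ext y
    constructor
    · rintro ⟨⟨a, b, c, d⟩, ⟨hx, hcd⟩, rfl⟩
      exact ⟨hsig_mem _ hx, by simpa [sig] using hcd⟩
    · rintro ⟨hy, hba⟩
      refine ⟨sig y, ⟨hsig_mem _ hy, by simpa [sig] using hba⟩, by simp [sig]⟩
  have hsiginj : Set.InjOn sig (Q1 N) := by
    rintro ⟨a, b, c, d⟩ _ ⟨a', b', c', d'⟩ _ h
    simp only [sig, Prod.mk.injEq] at h
    obtain ⟨h1, h2, h3, h4⟩ := h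
    simp [h1, h2, h3, h4]
  have hdisj : Disjoint (Q1 N) (Q2 N) := by
    rw [Set.disjoint_left]
    rintro ⟨a, b, c, d⟩ ⟨hx, hcd⟩ ⟨_, hba⟩
    exact (quad_xor hN hx).1 hcd hba
  have hunion : QuadSet N = Q1 N ∪ Q2 N := by
    ext ⟨a, b, c, d⟩
    constructor
    · intro hx
      by_cases h : c < d
      · exact Or.inl ⟨hx, h⟩
      · refine Or.inr ⟨hx, ?_⟩
        by_contra hba
        exact h ((quad_xor hN hx).2 hba)
    · rintro (h | h) <;> exact h.1
  rw [hunion, Set.ncard_union_eq hdisj hfin1 hfin2, ← himg,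
    Set.ncard_image_of_injOn hsiginj]
  ring

def Q1a (N : ℕ) : Set (ℕ × ℕ × ℕ × ℕ) := {x ∈ Q1 N | x.1 ≤ x.2.2.1}
def Q1b (N : ℕ) : Set (ℕ × ℕ × ℕ × ℕ) := {x ∈ Q1 N | x.2.2.1 < x.1}

def PairsSet (N : ℕ) : Set (ℕ × ℕ) :=
  {p : ℕ × ℕ | 1 ≤ p.1 ∧ p.1 < p.2 ∧ p.2 < N ∧ Nat.gcd p.1 p.2 = 1 ∧
    p.2 + invMod p.1 p.2 = N}

def TriplesSet (N : ℕ) : Set (ℕ × ℕ × ℕ) :=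
  {x : ℕ × ℕ × ℕ | 1 ≤ x.2.1 ∧ x.2.1 < x.1 ∧ x.1 < N ∧ 1 ≤ x.2.2 ∧
    Nat.gcd x.2.1 x.1 = 1 ∧ x.1 + invMod x.2.1 x.1 + x.2.1 * x.2.2 = N}

lemma quad_inv {N : ℕ} (hN : 3 ≤ N) {a b c d : ℕ} (hx : (a, b, c, d) ∈ QuadSet N) :
    d * a ≡ 1 [MOD c] := by
  obtain ⟨ha, hb, hc, hd⟩ := quad_facts hN hx
  obtain ⟨hdet, htr⟩ := hx
  simp only at hdet htr
  have h0 : d * a = b * c + 1 := by rw [mul_comm]; exact hdet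
  have h1 : 1 ≤ d * a := by omega
  exact ((Nat.modEq_iff_dvd' h1).2 ⟨b, by rw [h0, Nat.add_sub_cancel, mul_comm]⟩).symm

lemma pairs_card {N : ℕ} (hN : 3 ≤ N) : (Q1a N).ncard = (PairsSet N).ncard := by
  have himg : (fun x : ℕ × ℕ × ℕ × ℕ => (x.2.2.1, x.2.2.2)) '' Q1a N = PairsSet N := by
    ext ⟨q, q'⟩
    constructor
    · rintro ⟨⟨a, b, c, d⟩, ⟨⟨hx, hcd⟩, hac⟩, h⟩
      simp only [Prod.mk.injEq] at h hcd hac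
      obtain ⟨rfl, rfl⟩ := h
      obtain ⟨ha, hb, hc, hd⟩ := quad_facts hN hx
      have hinv : invMod c d = a := invMod_eq c d a ha hac (quad_inv hN hx)
      obtain ⟨hdet, htr⟩ := hx
      simp only at hdet htr
      exact ⟨hc, hcd, by omega, by rw [Nat.gcd_comm]; exact quad_gcd ⟨hdet, htr⟩,
        by rw [hinv]; omega⟩
    · rintro ⟨hq, hqq', hq'N, hgcd, heq⟩
      simp only at hq hqq' hq'N hgcd heq
      obtain ⟨hr1, hrq, hrmod⟩ := invMod_spec q q' hq (by rwa [Nat.gcd_comm])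
      have h1q : 1 ≤ q' * invMod q q' := Nat.mul_pos (by omega) (by omega)
      have hdvd' : q ∣ q' * invMod q q' - 1 := (Nat.modEq_iff_dvd' h1q).1 hrmod.symm
      have hdvd : q ∣ invMod q q' * q' - 1 := by
        rwa [mul_comm q' (invMod q q')] at hdvd'
      have hbq : (invMod q q' * q' - 1) / q * q = invMod q q' * q' - 1 :=
        Nat.div_mul_cancel hdvd
      have hX : 1 ≤ invMod q q' * q' := Nat.mul_pos (by omega) (by omega)
      have hdet : invMod q q' * q' = (invMod q q' * q' - 1) / q * q + 1 := by
        rw [hbq]; omega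
      have htr2 : invMod q q' + q' = N := by omega
      have hmem : (invMod q q', (invMod q q' * q' - 1) / q, q, q') ∈ QuadSet N :=
        ⟨hdet, htr2⟩
      exact ⟨_, ⟨⟨hmem, hqq'⟩, hrq⟩, rfl⟩
  have hinj : Set.InjOn (fun x : ℕ × ℕ × ℕ × ℕ => (x.2.2.1, x.2.2.2)) (Q1a N) := by
    rintro ⟨a, b, c, d⟩ ⟨⟨hx, _⟩, _⟩ ⟨a', b', c', d'⟩ ⟨⟨hx', _⟩, _⟩ h
    simp only [Prod.mk.injEq] at h
    obtain ⟨rfl, rfl⟩ := h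
    obtain ⟨ha, hb, hc, hd⟩ := quad_facts hN hx
    obtain ⟨hdet, htr⟩ := hx
    obtain ⟨hdet', htr'⟩ := hx'
    simp only at hdet htr hdet' htr'
    have haa : a = a' := by omega
    subst haa
    have hbb : b = b' := by
      have h2 : b * c = b' * c := by omega
      exact Nat.eq_of_mul_eq_mul_right (by omega) h2
    simp [hbb]
  rw [← himg, Set.ncard_image_of_injOn hinj]

lemma quad_b_decomp {N : ℕ} (hN : 3 ≤ N) {a b c d : ℕ} (hx : (a, b, c, d) ∈ Q1b N) :
    invMod c d ≤ a ∧ c ∣ (a - invMod c d) ∧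
      a = invMod c d + c * ((a - invMod c d) / c) ∧ 1 ≤ (a - invMod c d) / c := by
  obtain ⟨⟨hq, hcd⟩, hca⟩ := hx
  obtain ⟨ha, hb, hc, hd⟩ := quad_facts hN hq
  simp only at hcd hca
  obtain ⟨hr1, hrc, hrmod⟩ := invMod_spec c d hc (quad_gcd hq)
  have hmod : invMod c d ≡ a [MOD c] := by
    apply Nat.ModEq.cancel_left_of_coprime (c := d)
    · rw [Nat.gcd_comm]; exact quad_gcd hq
    · exact hrmod.trans (quad_inv hN hq).symm
  have hra : invMod c d ≤ a := by omega
  have hdvd : c ∣ a - invMod c d := (Nat.modEq_iff_dvd' hra).1 hmod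
  have hcm : c * ((a - invMod c d) / c) = a - invMod c d := Nat.mul_div_cancel' hdvd
  have hle : c ≤ a - invMod c d := Nat.le_of_dvd (by omega) hdvd
  refine ⟨hra, hdvd, by omega, ?_⟩
  exact (Nat.one_le_div_iff (by omega)).2 hle

lemma triples_card {N : ℕ} (hN : 3 ≤ N) : (Q1b N).ncard = (TriplesSet N).ncard := by
  have himg : (fun x : ℕ × ℕ × ℕ × ℕ =>
      (x.2.2.2, x.2.2.1, (x.1 - invMod x.2.2.1 x.2.2.2) / x.2.2.1)) '' Q1b N
      = TriplesSet N := by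
    ext ⟨q, p, t⟩
    constructor
    · rintro ⟨⟨a, b, c, d⟩, hx, h⟩
      obtain ⟨hra, hdvd, haeq, ht1⟩ := quad_b_decomp hN hx
      obtain ⟨⟨hq, hcd⟩, hca⟩ := hx
      obtain ⟨ha, hb, hc, hd⟩ := quad_facts hN hq
      simp only at hcd hca
      simp only [Prod.mk.injEq] at h
      obtain ⟨rfl, rfl, rfl⟩ := h
      obtain ⟨hr1, hrc, -⟩ := invMod_spec c d hc (quad_gcd hq)
      obtain ⟨hdet, htr⟩ := hq
      simp only at hdet htr
      refine ⟨hc, hcd, by omega, ht1, by rw [Nat.gcd_comm]; exact quad_gcd ⟨hdet, htr⟩, ?_⟩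
      show d + invMod c d + c * ((a - invMod c d) / c) = N
      omega
    · rintro ⟨hp, hpq, hqN, ht, hgcd, heq⟩
      simp only at hp hpq hqN ht hgcd heq
      obtain ⟨hr1, hrp, hrmod⟩ := invMod_spec p q hp (by rwa [Nat.gcd_comm])
      have hqr : 1 ≤ q * invMod p q := Nat.mul_pos (by omega) (by omega)
      have hdvd1 : p ∣ q * invMod p q - 1 := (Nat.modEq_iff_dvd' hqr).1 hrmod.symm
      have h1 : (invMod p q + p * t) * q = (q * invMod p q) + p * (t * q) := by ring
      have hdvd : p ∣ (invMod p q + p * t) * q - 1 := by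
        have h2 : (invMod p q + p * t) * q - 1 = (q * invMod p q - 1) + p * (t * q) := by omega
        rw [h2]
        exact Nat.dvd_add hdvd1 (Dvd.intro _ rfl)
      have hbp : ((invMod p q + p * t) * q - 1) / p * p = (invMod p q + p * t) * q - 1 :=
        Nat.div_mul_cancel hdvd
      have haq : 1 ≤ (invMod p q + p * t) * q := Nat.mul_pos (by omega) (by omega)
      have hdet : (invMod p q + p * t) * q = ((invMod p q + p * t) * q - 1) / p * p + 1 := by
        rw [hbp]; omega
      have htr2 : (invMod p q + p * t) + q = N := by omega
      have hmem : ((invMod p q + p * t), ((invMod p q + p * t) * q - 1) / p, p, q)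
          ∈ QuadSet N := ⟨hdet, htr2⟩
      have hpt : p * 1 ≤ p * t := Nat.mul_le_mul_left p ht
      have hpa : p < invMod p q + p * t := by omega
      refine ⟨_, ⟨⟨hmem, hpq⟩, hpa⟩, ?_⟩
      show ((q, p, (invMod p q + p * t - invMod p q) / p) : ℕ × ℕ × ℕ) = (q, p, t)
      rw [Nat.add_sub_cancel_left, Nat.mul_div_cancel_left _ (by omega : 0 < p)]
  have hinj : Set.InjOn (fun x : ℕ × ℕ × ℕ × ℕ =>
      (x.2.2.2, x.2.2.1, (x.1 - invMod x.2.2.1 x.2.2.2) / x.2.2.1)) (Q1b N) := by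
    rintro ⟨a, b, c, d⟩ hx ⟨a', b', c', d'⟩ hx' h
    obtain ⟨hra, hdvd, haeq, -⟩ := quad_b_decomp hN hx
    obtain ⟨hra', hdvd', haeq', -⟩ := quad_b_decomp hN hx'
    simp only [Prod.mk.injEq] at h
    obtain ⟨h1, h2, h3⟩ := h
    -- h1 : d = d', h2 : c = c'
    subst h1; subst h2
    have hx1 : c * ((a - invMod c d) / c) = c * ((a' - invMod c d) / c) := by rw [h3]
    have haa : a = a' := by omega
    subst haa
    obtain ⟨⟨⟨hdet, htr⟩, -⟩, -⟩ := hx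
    obtain ⟨⟨⟨hdet', htr'⟩, -⟩, -⟩ := hx'
    simp only at hdet htr hdet' htr'
    obtain ⟨-, -, hc, -⟩ := quad_facts hN (show (a, b, c, d) ∈ QuadSet N from ⟨hdet, htr⟩)
    have hbb : b = b' := by
      have h2 : b * c = b' * c := by omega
      exact Nat.eq_of_mul_eq_mul_right (by omega) h2
    simp [hbb]
  rw [← himg, Set.ncard_image_of_injOn hinj]

theorem stmt7 (N : ℕ) (hN : 3 ≤ N) :
    Phi (N : ℤ) =
      2 * ({p : ℕ × ℕ | 1 ≤ p.1 ∧ p.1 < p.2 ∧ p.2 < N ∧ Nat.gcd p.1 p.2 = 1 ∧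
              p.2 + invMod p.1 p.2 = N}.ncard +
           {x : ℕ × ℕ × ℕ | 1 ≤ x.2.1 ∧ x.2.1 < x.1 ∧ x.1 < N ∧ 1 ≤ x.2.2 ∧
              Nat.gcd x.2.1 x.1 = 1 ∧
              x.1 + invMod x.2.1 x.1 + x.2.1 * x.2.2 = N}.ncard) := by
  have h1 : Phi (N : ℤ) = (QuadSet N).ncard := phi_eq_quad N
  have h2 := quad_card N hN
  have hfin := quad_finite N hN
  have hsub1 : Q1a N ⊆ QuadSet N := fun x hx => hx.1.1
  have hsub2 : Q1b N ⊆ QuadSet N := fun x hx => hx.1.1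
  have hdisj : Disjoint (Q1a N) (Q1b N) := by
    rw [Set.disjoint_left]
    rintro ⟨a, b, c, d⟩ ⟨-, ha⟩ ⟨-, hb⟩
    simp only at ha hb
    omega
  have hun : Q1 N = Q1a N ∪ Q1b N := by
    ext x
    constructor
    · intro hx
      by_cases h : x.1 ≤ x.2.2.1
      · exact Or.inl ⟨hx, h⟩
      · exact Or.inr ⟨hx, by omega⟩
    · rintro (h | h) <;> exact h.1
  have h3 : (Q1 N).ncard = (Q1a N).ncard + (Q1b N).ncard := by
    rw [hun, Set.ncard_union_eq hdisj (hfin.subset hsub1) (hfin.subset hsub2)]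
  rw [h1, h2, h3, pairs_card hN, triples_card hN]
  rfl
end

section
/- For every integer N ≥ 3, (1/2)·Φ(N) equals the number of triples (q, p, t) of integers with 1 ≤ p < q < N, t ≥ 0, gcd(p, q) = 1 and q + inv_p(q) + p·t = N. -/
open Matrix

/-! ### Auxiliary definitions -/

/-- The set of matrices with nonnegative entries, determinant 1 and trace `N`. -/
def Sset (N : ℤ) : Set (Matrix (Fin 2) (Fin 2) ℤ) :=
  {C | C.det = 1 ∧ (∀ i j, 0 ≤ C i j) ∧ C.trace = N}

/-- The set of triples in the statement. -/
def Tset (N : ℕ) : Set (ℕ × ℕ × ℕ) :=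
  {x | 1 ≤ x.2.1 ∧ x.2.1 < x.1 ∧ x.1 < N ∧ Nat.gcd x.2.1 x.1 = 1 ∧
        x.1 + invMod x.2.1 x.1 + x.2.1 * x.2.2 = N}

/-- The map from triples to matrices. -/
def fmap (x : ℕ × ℕ × ℕ) : Matrix (Fin 2) (Fin 2) ℤ :=
  !![((x.1 : ℤ)), (((x.1 * invMod x.2.1 x.1 - 1) / x.2.1 + x.1 * x.2.2 : ℕ) : ℤ);
     ((x.2.1 : ℤ)), ((invMod x.2.1 x.1 + x.2.1 * x.2.2 : ℕ) : ℤ)]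

/-- 180 degree rotation of a matrix. -/
def gmap (C : Matrix (Fin 2) (Fin 2) ℤ) : Matrix (Fin 2) (Fin 2) ℤ :=
  !![C 1 1, C 1 0; C 0 1, C 0 0]

/-! ### The monoid closure -/

lemma E00 (w x y z : ℤ) : (!![w,x;y,z]) 0 0 = w := rfl
lemma E01 (w x y z : ℤ) : (!![w,x;y,z]) 0 1 = x := rfl
lemma E10 (w x y z : ℤ) : (!![w,x;y,z]) 1 0 = y := rfl
lemma E11 (w x y z : ℤ) : (!![w,x;y,z]) 1 1 = z := rfl


lemma gmap_gmap (C : Matrix (Fin 2) (Fin 2) ℤ) : gmap (gmap C) = C := by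
  ext i j
  fin_cases i <;> fin_cases j <;> simp [gmap]

lemma gmap_mem {N : ℕ} {C : Matrix (Fin 2) (Fin 2) ℤ} (hC : C ∈ Sset (N : ℤ)) :
    gmap C ∈ Sset (N : ℤ) := by
  obtain ⟨hdet, hpos, htr⟩ := hC
  refine ⟨?_, ?_, ?_⟩
  · rw [Matrix.det_fin_two] at hdet
    rw [gmap, Matrix.det_fin_two_of]
    linarith [hdet]
  · intro i j
    fin_cases i <;> fin_cases j <;> simp [gmap] <;> exact hpos _ _
  · rw [Matrix.trace_fin_two] at htr
    rw [gmap, Matrix.trace_fin_two, E00, E11]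
    linarith


-- division fact, ℕ-level, for the forward direction
lemma sdiv_fact {p q r : ℕ} (hp : 1 ≤ p) (hq : 1 ≤ q) (hr : 1 ≤ r)
    (hdvd : (p : ℤ) ∣ ((q : ℤ) * r - 1)) :
    (p : ℤ) * ((q * r - 1) / p : ℕ) = (q : ℤ) * r - 1 := by
  have hqr : 1 ≤ q * r := Nat.one_le_iff_ne_zero.mpr (by positivity)
  have hcast : ((q * r - 1 : ℕ) : ℤ) = (q : ℤ) * r - 1 := by
    push_cast [Nat.cast_sub hqr]
    ring
  have hdvdN : p ∣ q * r - 1 := by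
    have : (p : ℤ) ∣ ((q * r - 1 : ℕ) : ℤ) := by rw [hcast]; exact hdvd
    exact_mod_cast this
  rw [← hcast]
  exact_mod_cast congrArg (Nat.cast : ℕ → ℤ) (Nat.mul_div_cancel' hdvdN)


lemma closure_sub {C : Matrix (Fin 2) (Fin 2) ℤ} (h : C ∈ Submonoid.closure {A, B}) :
    C.det = 1 ∧ ∀ i j, 0 ≤ C i j := by
  induction h using Submonoid.closure_induction with
  | mem x hx =>
    rcases hx with h | h <;> subst h <;>
      refine ⟨by simp [A, B, Matrix.det_fin_two], ?_⟩ <;>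
      intro i j <;> fin_cases i <;> fin_cases j <;> simp [A, B]
  | one => exact ⟨by simp, by intro i j; fin_cases i <;> fin_cases j <;> simp⟩
  | mul x y hx hy ihx ihy =>
    refine ⟨by rw [Matrix.det_mul, ihx.1, ihy.1, one_mul], ?_⟩
    intro i j
    rw [Matrix.mul_apply]
    apply Finset.sum_nonneg
    intro k _
    exact mul_nonneg (ihx.2 i k) (ihy.2 k j)

lemma sub_closure_aux (n : ℕ) : ∀ C : Matrix (Fin 2) (Fin 2) ℤ,
    (C 0 0 + C 0 1 + C 1 0 + C 1 1).toNat ≤ n → C.det = 1 →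
    (∀ i j, 0 ≤ C i j) → C ∈ Submonoid.closure {A, B} := by
  induction n with
  | zero =>
    intro C hn hdet hpos
    exfalso
    have h00 := hpos 0 0
    have h01 := hpos 0 1
    have h10 := hpos 1 0
    have h11 := hpos 1 1
    rw [Matrix.det_fin_two] at hdet
    have : C 0 0 + C 0 1 + C 1 0 + C 1 1 ≤ 0 := by omega
    nlinarith
  | succ n ih =>
    intro C hn hdet hpos
    have h00 := hpos 0 0
    have h01 := hpos 0 1
    have h10 := hpos 1 0
    have h11 := hpos 1 1
    rw [Matrix.det_fin_two] at hdet
    set a := C 0 0 with ha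
    set b := C 0 1 with hb
    set c := C 1 0 with hc
    set d := C 1 1 with hd
    have hA : A ∈ Submonoid.closure ({A, B} : Set (Matrix (Fin 2) (Fin 2) ℤ)) :=
      Submonoid.subset_closure (Set.mem_insert _ _)
    have hB : B ∈ Submonoid.closure ({A, B} : Set (Matrix (Fin 2) (Fin 2) ℤ)) :=
      Submonoid.subset_closure (Set.mem_insert_of_mem _ rfl)
    have ha1 : 1 ≤ a := by nlinarith
    have hd1 : 1 ≤ d := by nlinarith
    have hCeta : C = !![a, b; c, d] := by
      rw [ha, hb, hc, hd]
      exact (Matrix.etaExpand_eq C).symm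
    by_cases hca : a ≤ c ∧ b ≤ d
    · -- C = A * C'
      have hC' : C = A * !![a, b; c - a, d - b] := by
        rw [hCeta, A, Matrix.mul_fin_two]
        congr 1 <;> ring
      rw [hC']
      refine mul_mem hA (ih _ ?_ ?_ ?_)
      · simp only [E00, E01, E10, E11]; omega
      · rw [Matrix.det_fin_two]
        simp only [E00, E01, E10, E11]
        nlinarith
      · intro i j
        fin_cases i <;> fin_cases j <;> simp <;> omega
    · by_cases hac : c ≤ a ∧ d ≤ b
      · have hC' : C = B * !![a - c, b - d; c, d] := by
          rw [hCeta, B, Matrix.mul_fin_two]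
          congr 1 <;> ring
        rw [hC']
        refine mul_mem hB (ih _ ?_ ?_ ?_)
        · simp only [E00, E01, E10, E11]; omega
        · rw [Matrix.det_fin_two]
          simp only [E00, E01, E10, E11]
          nlinarith
        · intro i j
          fin_cases i <;> fin_cases j <;> simp <;> omega
      · -- remaining: C = 1
        push_neg at hca hac
        have hb0 : b = 0 ∧ c = 0 := by
          by_cases hle : a ≤ c
          · have h2 := hca hle
            by_cases hle2 : c ≤ a
            · have h3 := hac hle2; omega
            · push_neg at hle2
              exfalso; nlinarith
          · push_neg at hle
            have h3 := hac hle.le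
            have hsum : b + c ≤ 0 := by nlinarith
            omega
        obtain ⟨hb', hc'⟩ := hb0
        rw [hb', hc'] at hdet
        have had : a * d = 1 := by linarith
        have ha' : a = 1 := Int.eq_one_of_mul_eq_one_right h00 had
        have hd' : d = 1 := by nlinarith
        have hC1 : C = 1 := by
          rw [hCeta, hb', hc', ha', hd']
          exact Matrix.one_fin_two.symm
        rw [hC1]
        exact one_mem _

lemma sub_closure {C : Matrix (Fin 2) (Fin 2) ℤ} (hdet : C.det = 1)
    (hpos : ∀ i j, 0 ≤ C i j) : C ∈ Submonoid.closure {A, B} := by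
  exact sub_closure_aux _ C le_rfl hdet hpos

/-! ### invMod -/

lemma invMod_spec_s8 {p q : ℕ} (hp : 1 ≤ p) (h : Nat.gcd q p = 1) :
    1 ≤ invMod p q ∧ invMod p q ≤ p ∧ (p : ℤ) ∣ (q * invMod p q - 1) := by
  unfold invMod
  by_cases hp1 : p = 1
  · subst hp1; simpa using ⟨le_refl 1, Int.one_dvd _⟩
  · have hp2 : 2 ≤ p := by omega
    haveI : NeZero p := ⟨by omega⟩
    haveI : Fact (1 < p) := ⟨by omega⟩
    simp only [hp1, if_false]
    have hu : IsUnit (q : ZMod p) := by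
      rw [ZMod.isUnit_iff_coprime]; exact h
    have hinv : (q : ZMod p) * (q : ZMod p)⁻¹ = 1 := ZMod.mul_inv_of_unit _ hu
    have hne : (q : ZMod p)⁻¹ ≠ 0 := by
      intro h0
      rw [h0, mul_zero] at hinv
      exact zero_ne_one hinv
    refine ⟨?_, ?_, ?_⟩
    · rcases Nat.eq_zero_or_pos ((q : ZMod p)⁻¹).val with h0 | h0
      · exact absurd ((ZMod.val_eq_zero _).mp h0) hne
      · exact h0
    · exact le_of_lt (ZMod.val_lt _)
    · have : ((q * ((q : ZMod p)⁻¹).val - 1 : ℤ) : ZMod p) = 0 := by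
        push_cast
        rw [ZMod.natCast_val, ZMod.cast_id, hinv, sub_self]
      exact (ZMod.intCast_zmod_eq_zero_iff_dvd _ _).mp this

/-! ### Structure of Sset -/

lemma Sset_struct {N : ℕ} (hN : 3 ≤ N) {C : Matrix (Fin 2) (Fin 2) ℤ}
    (hC : C ∈ Sset (N : ℤ)) :
    1 ≤ C 0 0 ∧ 1 ≤ C 0 1 ∧ 1 ≤ C 1 0 ∧ 1 ≤ C 1 1 ∧
      (C 1 0 < C 0 0 ↔ ¬ C 0 1 < C 1 1) := by
  obtain ⟨hdet, hpos, htr⟩ := hC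
  rw [Matrix.det_fin_two] at hdet
  rw [Matrix.trace_fin_two] at htr
  have h00 := hpos 0 0
  have h01 := hpos 0 1
  have h10 := hpos 1 0
  have h11 := hpos 1 1
  have hN' : (3 : ℤ) ≤ (N : ℤ) := by exact_mod_cast hN
  have ha : 1 ≤ C 0 0 := by nlinarith
  have hd : 1 ≤ C 1 1 := by nlinarith
  have hb : 1 ≤ C 0 1 := by
    by_contra h
    push_neg at h
    have hb0 : C 0 1 = 0 := by omega
    rw [hb0] at hdet
    have had : C 0 0 * C 1 1 = 1 := by linarith
    have h1 : C 0 0 = 1 := Int.eq_one_of_mul_eq_one_right h00 had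
    have h2 : C 1 1 = 1 := by nlinarith
    omega
  have hc : 1 ≤ C 1 0 := by
    by_contra h
    push_neg at h
    have hc0 : C 1 0 = 0 := by omega
    rw [hc0] at hdet
    have had : C 0 0 * C 1 1 = 1 := by linarith
    have h1 : C 0 0 = 1 := Int.eq_one_of_mul_eq_one_right h00 had
    have h2 : C 1 1 = 1 := by nlinarith
    omega
  refine ⟨ha, hb, hc, hd, ?_, ?_⟩
  · intro hlt hbd
    nlinarith
  · intro hnlt
    push_neg at hnlt
    by_contra hle
    push_neg at hle
    nlinarith

lemma fmap_image {N : ℕ} (hN : 3 ≤ N) :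
    fmap '' Tset N = {C | C ∈ Sset (N : ℤ) ∧ C 1 0 < C 0 0} := by
  ext C
  constructor
  · rintro ⟨⟨q, p, t⟩, ⟨hp, hpq, hqN, hg, hsum⟩, rfl⟩
    dsimp only at hp hpq hqN hg hsum ⊢
    set r := invMod p q with hrdef
    obtain ⟨hr1, hrp, hdvd⟩ := invMod_spec_s8 hp (by rwa [Nat.gcd_comm])
    have hq1 : 1 ≤ q := by omega
    have hps := sdiv_fact hp hq1 hr1 hdvd
    set s := (q * invMod p q - 1) / p with hsdef
    have hpsZ : (p : ℤ) * (s : ℤ) = (q : ℤ) * r - 1 := hps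
    have hsumZ : (q : ℤ) + (r : ℤ) + (p : ℤ) * (t : ℤ) = (N : ℤ) := by
      exact_mod_cast hsum
    refine ⟨⟨?_, ?_, ?_⟩, ?_⟩
    · rw [fmap]
      dsimp only
      rw [Matrix.det_fin_two_of, ← hrdef, ← hsdef]
      have e1 : ((s + q * t : ℕ) : ℤ) = (s : ℤ) + (q : ℤ) * t := by push_cast; ring
      have e2 : ((r + p * t : ℕ) : ℤ) = (r : ℤ) + (p : ℤ) * t := by push_cast; ring
      rw [e1, e2]
      nlinarith [hpsZ]
    · intro i j
      fin_cases i <;> fin_cases j <;> simp [fmap] <;> positivity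
    · rw [fmap]
      dsimp only
      rw [Matrix.trace_fin_two, E00, E11, ← hrdef]
      have e2 : ((r + p * t : ℕ) : ℤ) = (r : ℤ) + (p : ℤ) * t := by push_cast; ring
      rw [e2]
      linarith
    · rw [fmap]
      dsimp only
      rw [E10, E00]
      exact_mod_cast hpq
  · rintro ⟨⟨hdet, hpos, htr⟩, hlt⟩
    have hs := Sset_struct hN ⟨hdet, hpos, htr⟩
    obtain ⟨ha1, hb1, hc1, hd1, -⟩ := hs
    rw [Matrix.det_fin_two] at hdet
    rw [Matrix.trace_fin_two] at htr
    set a := C 0 0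
    set b := C 0 1
    set c := C 1 0
    set d := C 1 1
    set q := a.toNat with hqdef
    set p := c.toNat with hpdef
    have hqa : (q : ℤ) = a := Int.toNat_of_nonneg (by linarith)
    have hpc : (p : ℤ) = c := Int.toNat_of_nonneg (by linarith)
    have hp : 1 ≤ p := by omega
    have hq : 1 ≤ q := by omega
    -- coprimality
    have hcop : IsCoprime c a := ⟨-b, d, by linarith⟩
    have hgcd : Nat.gcd p q = 1 := by
      have h1 := Int.isCoprime_iff_gcd_eq_one.mp hcop
      have h2 : c.natAbs = p := by
        have := Int.natAbs_of_nonneg (show 0 ≤ c by linarith)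
        exact_mod_cast this.trans hpc.symm
      have h3 : a.natAbs = q := by
        have := Int.natAbs_of_nonneg (show 0 ≤ a by linarith)
        exact_mod_cast this.trans hqa.symm
      rwa [Int.gcd, h2, h3] at h1
    obtain ⟨hr1, hrp, hdvd⟩ := invMod_spec_s8 hp (by rwa [Nat.gcd_comm])
    set r := invMod p q with hrdef
    have hrpZ : (r : ℤ) ≤ (p : ℤ) := by exact_mod_cast hrp
    have hr1Z : (1 : ℤ) ≤ (r : ℤ) := by exact_mod_cast hr1
    have hp1Z : (1 : ℤ) ≤ (p : ℤ) := by rw [hpc]; exact hc1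
    have hdvd2 : (p : ℤ) ∣ (q : ℤ) * d - 1 :=
      ⟨b, by rw [hqa, hpc]; linarith⟩
    have hdvd3 : (p : ℤ) ∣ (q : ℤ) * ((d : ℤ) - r) := by
      have h := dvd_sub hdvd2 hdvd
      have he : (q : ℤ) * ((d : ℤ) - r) = ((q : ℤ) * d - 1) - ((q : ℤ) * r - 1) := by ring
      rwa [he]
    have hcop2 : IsCoprime (p : ℤ) (q : ℤ) := by
      rw [Int.isCoprime_iff_gcd_eq_one, Int.gcd_natCast_natCast]
      exact hgcd
    have hdr : (p : ℤ) ∣ ((d : ℤ) - r) := hcop2.dvd_of_dvd_mul_left hdvd3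
    obtain ⟨k, hk⟩ := hdr
    have hk0 : 0 ≤ k := by nlinarith
    set t := k.toNat with htdef
    have htk : (t : ℤ) = k := Int.toNat_of_nonneg hk0
    have hd_eq : d = (r : ℤ) + (p : ℤ) * k := by linarith
    have hq1 : 1 ≤ q := by
      have : (1 : ℤ) ≤ (q : ℤ) := by rw [hqa]; exact ha1
      exact_mod_cast this
    have hps := sdiv_fact hp hq1 hr1 hdvd
    set s := (q * invMod p q - 1) / p with hsdef
    have hpsZ : (p : ℤ) * (s : ℤ) = (q : ℤ) * r - 1 := hps
    have hb_eq : (p : ℤ) * b = (q : ℤ) * d - 1 := by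
      rw [hpc, hqa]; linarith
    have hp0 : (p : ℤ) ≠ 0 := by linarith
    have e00 : fmap (q, p, t) 0 0 = a := by
      rw [fmap]; dsimp only; rw [E00, hqa]
    have e10 : fmap (q, p, t) 1 0 = c := by
      rw [fmap]; dsimp only; rw [E10, hpc]
    have e11 : fmap (q, p, t) 1 1 = d := by
      rw [fmap]; dsimp only; rw [E11, ← hrdef]
      push_cast
      rw [htk]
      linarith
    have e01 : fmap (q, p, t) 0 1 = b := by
      rw [fmap]; dsimp only; rw [E01, ← hrdef, ← hsdef]
      apply mul_left_cancel₀ hp0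
      rw [hb_eq]
      push_cast
      linear_combination hpsZ - (q : ℤ) * hd_eq + (p : ℤ) * (q : ℤ) * htk
    refine ⟨(q, p, t), ⟨hp, ?_, ?_, hgcd, ?_⟩, ?_⟩
    · have : (p : ℤ) < (q : ℤ) := by rw [hpc, hqa]; exact hlt
      exact_mod_cast this
    · have : (q : ℤ) < (N : ℤ) := by rw [hqa]; linarith
      exact_mod_cast this
    · have : ((q + r + p * t : ℕ) : ℤ) = (N : ℤ) := by
        push_cast
        rw [htk, hqa]
        linarith
      exact_mod_cast this
    · ext i j
      fin_cases i <;> fin_cases j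
      · exact e00
      · exact e01
      · exact e10
      · exact e11

lemma fmap_injOn {N : ℕ} : Set.InjOn fmap (Tset N) := by
  rintro ⟨q1, p1, t1⟩ ⟨hp1, -, -, -, -⟩ ⟨q2, p2, t2⟩ ⟨hp2, -, -, -, -⟩ h
  dsimp only at hp1 hp2
  have he := Matrix.ext_iff.2 h
  have h00 := he 0 0
  have h10 := he 1 0
  have h11 := he 1 1
  simp only [fmap, E00, E10, E11] at h00 h10 h11
  have hq : q1 = q2 := by exact_mod_cast h00
  have hp : p1 = p2 := by exact_mod_cast h10
  subst hq; subst hp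
  have h11' : invMod p1 q1 + p1 * t1 = invMod p1 q1 + p1 * t2 := by exact_mod_cast h11
  have ht : t1 = t2 := by
    have := Nat.eq_of_mul_eq_mul_left (show 0 < p1 by omega) (by omega : p1 * t1 = p1 * t2)
    exact this
  rw [ht]

lemma gmap_image {N : ℕ} (hN : 3 ≤ N) :
    gmap '' {C | C ∈ Sset (N : ℤ) ∧ C 1 0 < C 0 0} =
      {C | C ∈ Sset (N : ℤ) ∧ ¬ C 1 0 < C 0 0} := by
  ext C
  constructor
  · rintro ⟨D, ⟨hD, hlt⟩, rfl⟩
    refine ⟨gmap_mem hD, ?_⟩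
    have hs := Sset_struct hN hD
    have : ¬ D 0 1 < D 1 1 := hs.2.2.2.2.1 hlt
    simpa [gmap, E00, E10] using this
  · rintro ⟨hC, hnlt⟩
    refine ⟨gmap C, ⟨gmap_mem hC, ?_⟩, gmap_gmap C⟩
    have hs := Sset_struct hN hC
    have hbd : C 0 1 < C 1 1 := by
      by_contra h
      exact hnlt (hs.2.2.2.2.2 h)
    simpa [gmap, E00, E10] using hbd

lemma Tset_finite (N : ℕ) : (Tset N).Finite := by
  apply Set.Finite.subset ((Set.finite_Iio N).prod ((Set.finite_Iio N).prod (Set.finite_Iic N)))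
  rintro ⟨q, p, t⟩ ⟨h1, h2, h3, h4, h5⟩
  dsimp only at h1 h2 h3 h4 h5
  refine ⟨h3, lt_trans h2 h3, ?_⟩
  simp only [Set.mem_Iic]
  calc t ≤ p * t := Nat.le_mul_of_pos_left t h1
  _ ≤ N := by omega

theorem stmt8 (N : ℕ) (hN : 3 ≤ N) :
    Phi (N : ℤ) =
      2 * {x : ℕ × ℕ × ℕ | 1 ≤ x.2.1 ∧ x.2.1 < x.1 ∧ x.1 < N ∧
            Nat.gcd x.2.1 x.1 = 1 ∧
            x.1 + invMod x.2.1 x.1 + x.2.1 * x.2.2 = N}.ncard := by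
  have hset : {C : Matrix (Fin 2) (Fin 2) ℤ |
      C ∈ Submonoid.closure {A, B} ∧ Matrix.trace C = (N : ℤ)} = Sset (N : ℤ) := by
    ext C
    constructor
    · rintro ⟨h1, h2⟩
      exact ⟨(closure_sub h1).1, (closure_sub h1).2, h2⟩
    · rintro ⟨h1, h2, h3⟩
      exact ⟨sub_closure h1 h2, h3⟩
  have hsplit : Sset (N : ℤ) =
      {C | C ∈ Sset (N : ℤ) ∧ C 1 0 < C 0 0} ∪
      {C | C ∈ Sset (N : ℤ) ∧ ¬ C 1 0 < C 0 0} := by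
    ext C
    constructor
    · intro hC
      by_cases h : C 1 0 < C 0 0
      · exact Or.inl ⟨hC, h⟩
      · exact Or.inr ⟨hC, h⟩
    · rintro (⟨hC, -⟩ | ⟨hC, -⟩) <;> exact hC
  have hfinT : (Tset N).Finite := Tset_finite N
  have hfinP : {C | C ∈ Sset (N : ℤ) ∧ C 1 0 < C 0 0}.Finite := by
    rw [← fmap_image hN]; exact hfinT.image _
  have hfinM : {C | C ∈ Sset (N : ℤ) ∧ ¬ C 1 0 < C 0 0}.Finite := by
    rw [← gmap_image hN]; exact hfinP.image _
  have hdisj : Disjoint {C | C ∈ Sset (N : ℤ) ∧ C 1 0 < C 0 0}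
      {C | C ∈ Sset (N : ℤ) ∧ ¬ C 1 0 < C 0 0} := by
    rw [Set.disjoint_left]
    rintro C ⟨_, h1⟩ ⟨_, h2⟩
    exact h2 h1
  have hginj : Function.Injective gmap := by
    intro C D h
    have he := Matrix.ext_iff.2 h
    have h00 := he 0 0
    have h01 := he 0 1
    have h10 := he 1 0
    have h11 := he 1 1
    simp [gmap] at h00 h01 h10 h11
    ext i j
    fin_cases i <;> fin_cases j <;> assumption
  have hcardM : {C | C ∈ Sset (N : ℤ) ∧ ¬ C 1 0 < C 0 0}.ncard =
      {C | C ∈ Sset (N : ℤ) ∧ C 1 0 < C 0 0}.ncard := by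
    rw [← gmap_image hN, Set.ncard_image_of_injective _ hginj]
  have hcardP : {C | C ∈ Sset (N : ℤ) ∧ C 1 0 < C 0 0}.ncard = (Tset N).ncard := by
    rw [← fmap_image hN, Set.ncard_image_of_injOn fmap_injOn]
  rw [Phi, hset, hsplit, Set.ncard_union_eq hdisj hfinP hfinM, hcardM, hcardP]
  have : {x : ℕ × ℕ × ℕ | 1 ≤ x.2.1 ∧ x.2.1 < x.1 ∧ x.1 < N ∧
            Nat.gcd x.2.1 x.1 = 1 ∧
            x.1 + invMod x.2.1 x.1 + x.2.1 * x.2.2 = N} = Tset N := rfl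
  rw [this]
  ring
end

section
/- Let X be a positive integer that is not a perfect square. Then Υ(X) = 2·#ℒ₀^< + 4·#ℒ₁ + 2·#ℒ₂, where ℒ₀^< = {(λ, μ) ∈ ℕ≥1 × ℕ≥1 : 4λμ = X and 2λ < √X}, ℒ₁ = {(λ, μ, m) ∈ ℕ≥1 × ℕ≥1 × ℕ≥1 : 4λμ = X − m² and 2λ < −m + √X}, and ℒ₂ = {(λ, μ, m) ∈ ℕ≥1 × ℕ≥1 × ℕ≥1 : 4λμ = X − m² and −m + √X ≤ 2λ ≤ m + √X}. -/
open Matrix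

noncomputable def L0lt (X : ℤ) : ℕ :=
  {p : ℤ × ℤ | 0 < p.1 ∧ 0 < p.2 ∧ 4 * p.1 * p.2 = X ∧
    ((2 * p.1 : ℤ) : ℝ) < Real.sqrt X}.ncard

noncomputable def L1 (X : ℤ) : ℕ :=
  {p : ℤ × ℤ × ℤ | 0 < p.1 ∧ 0 < p.2.1 ∧ 0 < p.2.2 ∧
    4 * p.1 * p.2.1 = X - p.2.2 ^ 2 ∧
    ((2 * p.1 : ℤ) : ℝ) < -((p.2.2 : ℤ) : ℝ) + Real.sqrt X}.ncard

noncomputable def L2 (X : ℤ) : ℕ :=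
  {p : ℤ × ℤ × ℤ | 0 < p.1 ∧ 0 < p.2.1 ∧ 0 < p.2.2 ∧
    4 * p.1 * p.2.1 = X - p.2.2 ^ 2 ∧
    -((p.2.2 : ℤ) : ℝ) + Real.sqrt X ≤ ((2 * p.1 : ℤ) : ℝ) ∧
    ((2 * p.1 : ℤ) : ℝ) ≤ ((p.2.2 : ℤ) : ℝ) + Real.sqrt X}.ncard

/-! ### Auxiliary lemmas -/

private lemma int_le_self_sq (m : ℤ) : m ≤ m ^ 2 := by
  rcases le_or_gt m 0 with h | h
  · nlinarith [sq_nonneg m]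
  · nlinarith

private lemma tripleFinite (X : ℤ) {S : Set (ℤ × ℤ × ℤ)}
    (h : ∀ p ∈ S, 0 < p.1 ∧ 0 < p.2.1 ∧ 4 * p.1 * p.2.1 + p.2.2 ^ 2 = X) :
    S.Finite := by
  apply Set.Finite.subset (Set.finite_Icc ((1 : ℤ), (1 : ℤ), (-X : ℤ)) ((X : ℤ), X, X))
  intro p hp
  obtain ⟨h1, h2, h3⟩ := h p hp
  have hm := int_le_self_sq p.2.2
  have hm' := int_le_self_sq (-p.2.2)
  have hmul : 0 < p.1 * p.2.1 := mul_pos h1 h2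
  simp only [Set.mem_Icc, Prod.le_def]
  refine ⟨⟨h1, h2, by nlinarith⟩, ⟨by nlinarith [sq_nonneg p.2.2],
    by nlinarith [sq_nonneg p.2.2], by nlinarith⟩⟩

private lemma pairFinite (X : ℤ) {S : Set (ℤ × ℤ)}
    (h : ∀ p ∈ S, 0 < p.1 ∧ 0 < p.2 ∧ 4 * p.1 * p.2 = X) :
    S.Finite := by
  apply Set.Finite.subset (Set.finite_Icc ((1 : ℤ), (1 : ℤ)) ((X : ℤ), X))
  intro p hp
  obtain ⟨h1, h2, h3⟩ := h p hp
  simp only [Set.mem_Icc, Prod.le_def]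
  exact ⟨⟨h1, h2⟩, ⟨by nlinarith, by nlinarith⟩⟩

/-- The core real inequality equivalence. -/
private lemma key_iff {r a b m : ℝ} (ha : 0 < a) (hb : 0 < b) (hm : 0 ≤ m)
    (hr : 0 < r) (heq : a * b = (r - m) * (r + m)) : a < r - m ↔ r + m < b := by
  have hrm : 0 < r + m := by linarith
  constructor
  · intro h
    have h1 : 0 < r - m := lt_trans ha h
    nlinarith [mul_pos (sub_pos.mpr h) hrm]
  · intro h
    have h1 : 0 < r - m := by nlinarith [mul_pos ha hb]
    nlinarith [mul_pos h1 (sub_pos.mpr h)]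

private def P0 (X : ℤ) : Set (ℤ × ℤ) := {p | 0 < p.1 ∧ 0 < p.2 ∧ 4 * p.1 * p.2 = X}

private def SP (X : ℤ) : Set (ℤ × ℤ × ℤ) :=
  {p | 0 < p.1 ∧ 0 < p.2.1 ∧ 0 < p.2.2 ∧ 4 * p.1 * p.2.1 + p.2.2 ^ 2 = X}

private lemma swap3_inj : Function.Injective (fun p : ℤ × ℤ × ℤ => (p.2.1, p.1, p.2.2)) := by
  intro a b h
  rcases a with ⟨a1, a2, a3⟩; rcases b with ⟨b1, b2, b3⟩
  simp only [Prod.mk.injEq] at h ⊢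
  tauto

private lemma neg3_inj : Function.Injective (fun p : ℤ × ℤ × ℤ => (p.1, p.2.1, -p.2.2)) := by
  intro a b h
  rcases a with ⟨a1, a2, a3⟩; rcases b with ⟨b1, b2, b3⟩
  simp only [Prod.mk.injEq] at h ⊢
  refine ⟨h.1, h.2.1, by omega⟩

private lemma emb3_inj : Function.Injective (fun q : ℤ × ℤ => (q.1, q.2, (0 : ℤ))) := by
  intro a b h
  rcases a with ⟨a1, a2⟩; rcases b with ⟨b1, b2⟩
  simp only [Prod.mk.injEq] at h ⊢
  tauto

private lemma swap2_inj : Function.Injective (fun p : ℤ × ℤ => (p.2, p.1)) := by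
  intro a b h
  rcases a with ⟨a1, a2⟩; rcases b with ⟨b1, b2⟩
  simp only [Prod.mk.injEq] at h ⊢
  tauto

/-- Step 1: split by the sign of `m`. -/
private lemma upsilon_split (X : ℤ) (hX : 0 < X) :
    Upsilon X = (P0 X).ncard + 2 * (SP X).ncard := by
  classical
  set S0 : Set (ℤ × ℤ × ℤ) := (fun q : ℤ × ℤ => (q.1, q.2, (0 : ℤ))) '' (P0 X) with hS0
  set Sneg : Set (ℤ × ℤ × ℤ) := (fun p : ℤ × ℤ × ℤ => (p.1, p.2.1, -p.2.2)) '' (SP X)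
    with hSneg
  have hSPfin : (SP X).Finite := tripleFinite X (fun p hp => ⟨hp.1, hp.2.1, hp.2.2.2⟩)
  have hP0fin : (P0 X).Finite := pairFinite X (fun p hp => hp)
  have hS0fin : S0.Finite := hP0fin.image _
  have hSnegfin : Sneg.Finite := hSPfin.image _
  have hdecomp :
      {p : ℤ × ℤ × ℤ | 0 < p.1 ∧ 0 < p.2.1 ∧ 4 * p.1 * p.2.1 + p.2.2 ^ 2 = X}
        = S0 ∪ (SP X ∪ Sneg) := by
    ext p
    simp only [Set.mem_setOf_eq, Set.mem_union, hS0, hSneg, Set.mem_image, P0, SP,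
      Set.mem_setOf_eq]
    constructor
    · rintro ⟨h1, h2, h3⟩
      rcases lt_trichotomy p.2.2 0 with hm | hm | hm
      · exact Or.inr (Or.inr ⟨(p.1, p.2.1, -p.2.2),
          ⟨h1, h2, by show (0:ℤ) < -p.2.2; omega,
           by show 4 * p.1 * p.2.1 + (-p.2.2) ^ 2 = X; linear_combination h3⟩, by simp⟩)
      · exact Or.inl ⟨(p.1, p.2.1), ⟨h1, h2, by nlinarith⟩, by simp [← hm]⟩
      · exact Or.inr (Or.inl ⟨h1, h2, hm, h3⟩)
    · rintro (⟨q, ⟨h1, h2, h3⟩, rfl⟩ | ⟨h1, h2, h3, h4⟩ | ⟨q, ⟨h1, h2, h3, h4⟩, rfl⟩)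
      · exact ⟨h1, h2, by simpa using h3⟩
      · exact ⟨h1, h2, h4⟩
      · exact ⟨h1, h2, by simpa [neg_pow] using h4⟩
  have hd1 : Disjoint S0 (SP X ∪ Sneg) := by
    rw [Set.disjoint_left]
    rintro p ⟨q, hq, rfl⟩ (hin | ⟨q', hq', he⟩)
    · exact absurd hin.2.2.1 (by simp)
    · have h1 : q'.2.2 > 0 := hq'.2.2.1
      have h2 := congrArg (fun z : ℤ × ℤ × ℤ => z.2.2) he
      simp at h2
      omega
  have hd2 : Disjoint (SP X) Sneg := by
    rw [Set.disjoint_left]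
    rintro p hp ⟨q, hq, rfl⟩
    have h1 : q.2.2 > 0 := hq.2.2.1
    have h2 : -q.2.2 > 0 := hp.2.2.1
    omega
  have hcard0 : S0.ncard = (P0 X).ncard := Set.ncard_image_of_injective _ emb3_inj
  have hcardn : Sneg.ncard = (SP X).ncard := Set.ncard_image_of_injective _ neg3_inj
  rw [Upsilon, hdecomp, Set.ncard_union_eq hd1 hS0fin (hSPfin.union hSnegfin),
    Set.ncard_union_eq hd2 hSPfin hSnegfin, hcard0, hcardn]
  ring

/-- Step 2: the `m = 0` slice. -/
private lemma P0_card (X : ℕ) (hX : 0 < X) (hsq : ¬ IsSquare X) :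
    (P0 (X : ℤ)).ncard = 2 * L0lt (X : ℤ) := by
  classical
  have hirr : Irrational (Real.sqrt X) := (irrational_sqrt_natCast_iff).mpr hsq
  have hXr : (((X : ℤ) : ℝ)) = ((X : ℕ) : ℝ) := by push_cast; ring
  set r : ℝ := Real.sqrt ((X : ℤ) : ℝ) with hrdef
  have hirr' : Irrational r := by rwa [hrdef, hXr]
  have hrpos : 0 < r := Real.sqrt_pos.mpr (by rw [hXr]; positivity)
  have hr2 : r ^ 2 = ((X : ℤ) : ℝ) := Real.sq_sqrt (by rw [hXr]; positivity)
  set Plt : Set (ℤ × ℤ) := {p | 0 < p.1 ∧ 0 < p.2 ∧ 4 * p.1 * p.2 = (X : ℤ) ∧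
    ((2 * p.1 : ℤ) : ℝ) < r} with hPlt
  set Pgt : Set (ℤ × ℤ) := {p | 0 < p.1 ∧ 0 < p.2 ∧ 4 * p.1 * p.2 = (X : ℤ) ∧
    r < ((2 * p.1 : ℤ) : ℝ)} with hPgt
  have hkey : ∀ a b : ℤ, 0 < a → 0 < b → 4 * a * b = (X : ℤ) →
      (((2 * a : ℤ) : ℝ) < r ↔ r < ((2 * b : ℤ) : ℝ)) := by
    intro a b ha hb heq
    have heqr : ((2 * a : ℤ) : ℝ) * ((2 * b : ℤ) : ℝ) = (r - 0) * (r + 0) := by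
      push_cast
      rw [sub_zero, add_zero, ← sq, hr2]
      push_cast
      nlinarith [congrArg (fun z : ℤ => (z : ℝ)) heq, (by push_cast; ring :
        ((4 * a * b : ℤ) : ℝ) = 4 * (a : ℝ) * (b : ℝ))]
    have := key_iff (r := r) (a := ((2 * a : ℤ) : ℝ)) (b := ((2 * b : ℤ) : ℝ)) (m := 0)
      (by push_cast; positivity) (by push_cast; positivity) le_rfl hrpos heqr
    simpa using this
  have hdecomp : P0 (X : ℤ) = Plt ∪ Pgt := by
    ext p
    simp only [P0, hPlt, hPgt, Set.mem_setOf_eq, Set.mem_union]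
    constructor
    · rintro ⟨h1, h2, h3⟩
      have hne : ((2 * p.1 : ℤ) : ℝ) ≠ r := fun h => (hirr'.ne_int (2 * p.1)) h.symm
      rcases lt_or_gt_of_ne hne with h | h
      · exact Or.inl ⟨h1, h2, h3, h⟩
      · exact Or.inr ⟨h1, h2, h3, h⟩
    · rintro (⟨h1, h2, h3, _⟩ | ⟨h1, h2, h3, _⟩) <;> exact ⟨h1, h2, h3⟩
  have hdisj : Disjoint Plt Pgt := by
    rw [Set.disjoint_left]
    rintro p ⟨_, _, _, h4⟩ ⟨_, _, _, h8⟩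
    exact absurd (lt_trans h4 h8) (lt_irrefl _)
  have hgt : Pgt = (fun p : ℤ × ℤ => (p.2, p.1)) '' Plt := by
    ext p
    simp only [Set.mem_image, hPlt, hPgt, Set.mem_setOf_eq]
    constructor
    · rintro ⟨h1, h2, h3, h4⟩
      exact ⟨(p.2, p.1), ⟨h2, h1, by linarith, (hkey p.2 p.1 h2 h1 (by linarith)).mpr h4⟩,
        rfl⟩
    · rintro ⟨q, ⟨h1, h2, h3, h4⟩, rfl⟩
      exact ⟨h2, h1, by linarith, (hkey q.1 q.2 h1 h2 h3).mp h4⟩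
  have hfinlt : Plt.Finite := pairFinite (X : ℤ) (fun p hp => ⟨hp.1, hp.2.1, hp.2.2.1⟩)
  have hfingt : Pgt.Finite := pairFinite (X : ℤ) (fun p hp => ⟨hp.1, hp.2.1, hp.2.2.1⟩)
  have hcards : Pgt.ncard = Plt.ncard := by rw [hgt, Set.ncard_image_of_injective _ swap2_inj]
  rw [hdecomp, Set.ncard_union_eq hdisj hfinlt hfingt, hcards, L0lt]
  ring

/-- Step 3: the `m > 0` slice. -/
private lemma SP_card (X : ℕ) (hX : 0 < X) :
    (SP (X : ℤ)).ncard = 2 * L1 (X : ℤ) + L2 (X : ℤ) := by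
  classical
  have hXr : (((X : ℤ) : ℝ)) = ((X : ℕ) : ℝ) := by push_cast; ring
  set r : ℝ := Real.sqrt ((X : ℤ) : ℝ) with hrdef
  have hrpos : 0 < r := Real.sqrt_pos.mpr (by rw [hXr]; positivity)
  have hr2 : r ^ 2 = ((X : ℤ) : ℝ) := Real.sq_sqrt (by rw [hXr]; positivity)
  set A : Set (ℤ × ℤ × ℤ) := {p | 0 < p.1 ∧ 0 < p.2.1 ∧ 0 < p.2.2 ∧
    4 * p.1 * p.2.1 = (X : ℤ) - p.2.2 ^ 2 ∧
    ((2 * p.1 : ℤ) : ℝ) < -((p.2.2 : ℤ) : ℝ) + r} with hA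
  set B : Set (ℤ × ℤ × ℤ) := {p | 0 < p.1 ∧ 0 < p.2.1 ∧ 0 < p.2.2 ∧
    4 * p.1 * p.2.1 = (X : ℤ) - p.2.2 ^ 2 ∧
    -((p.2.2 : ℤ) : ℝ) + r ≤ ((2 * p.1 : ℤ) : ℝ) ∧
    ((2 * p.1 : ℤ) : ℝ) ≤ ((p.2.2 : ℤ) : ℝ) + r} with hB
  set C : Set (ℤ × ℤ × ℤ) := {p | 0 < p.1 ∧ 0 < p.2.1 ∧ 0 < p.2.2 ∧
    4 * p.1 * p.2.1 = (X : ℤ) - p.2.2 ^ 2 ∧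
    ((p.2.2 : ℤ) : ℝ) + r < ((2 * p.1 : ℤ) : ℝ)} with hC
  have hkey : ∀ a b m : ℤ, 0 < a → 0 < b → 0 < m → 4 * a * b = (X : ℤ) - m ^ 2 →
      (((2 * a : ℤ) : ℝ) < -((m : ℤ) : ℝ) + r ↔ ((m : ℤ) : ℝ) + r < ((2 * b : ℤ) : ℝ)) := by
    intro a b m ha hb hm heq
    have heqr : ((2 * a : ℤ) : ℝ) * ((2 * b : ℤ) : ℝ) = (r - (m : ℝ)) * (r + (m : ℝ)) := by
      have := congrArg (fun z : ℤ => (z : ℝ)) heq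
      push_cast at this
      have hx : (r - (m : ℝ)) * (r + (m : ℝ)) = r ^ 2 - (m : ℝ) ^ 2 := by ring
      rw [hx, hr2]
      push_cast
      linarith [this]
    have := key_iff (r := r) (a := ((2 * a : ℤ) : ℝ)) (b := ((2 * b : ℤ) : ℝ)) (m := (m : ℝ))
      (by push_cast; positivity) (by push_cast; positivity)
      (by positivity) hrpos heqr
    constructor
    · intro h; linarith [this.mp (by linarith)]
    · intro h; linarith [this.mpr (by linarith)]
  have hdecomp : SP (X : ℤ) = A ∪ (B ∪ C) := by
    ext p
    simp only [SP, hA, hB, hC, Set.mem_setOf_eq, Set.mem_union]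
    constructor
    · rintro ⟨h1, h2, h3, h4⟩
      have h4' : 4 * p.1 * p.2.1 = (X : ℤ) - p.2.2 ^ 2 := by linarith
      rcases lt_or_ge ((2 * p.1 : ℤ) : ℝ) (-((p.2.2 : ℤ) : ℝ) + r) with h | h
      · exact Or.inl ⟨h1, h2, h3, h4', h⟩
      · rcases le_or_gt ((2 * p.1 : ℤ) : ℝ) (((p.2.2 : ℤ) : ℝ) + r) with h' | h'
        · exact Or.inr (Or.inl ⟨h1, h2, h3, h4', h, h'⟩)
        · exact Or.inr (Or.inr ⟨h1, h2, h3, h4', h'⟩)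
    · rintro (⟨h1, h2, h3, h4, _⟩ | ⟨h1, h2, h3, h4, _⟩ | ⟨h1, h2, h3, h4, _⟩) <;>
        exact ⟨h1, h2, h3, by linarith⟩
  have hd1 : Disjoint A (B ∪ C) := by
    rw [Set.disjoint_left]
    rintro p ⟨_, _, _, _, h5⟩ (⟨_, _, _, _, h6, _⟩ | ⟨_, _, h3, _, h7⟩)
    · linarith
    · have : (0 : ℝ) < ((p.2.2 : ℤ) : ℝ) := by exact_mod_cast h3
      linarith
  have hd2 : Disjoint B C := by
    rw [Set.disjoint_left]
    rintro p ⟨_, _, _, _, _, h6⟩ ⟨_, _, _, _, h7⟩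
    linarith
  have hCA : C = (fun p : ℤ × ℤ × ℤ => (p.2.1, p.1, p.2.2)) '' A := by
    ext p
    simp only [Set.mem_image, hA, hC, Set.mem_setOf_eq]
    constructor
    · rintro ⟨h1, h2, h3, h4, h5⟩
      refine ⟨(p.2.1, p.1, p.2.2), ⟨h2, h1, h3, by linarith,
        (hkey p.2.1 p.1 p.2.2 h2 h1 h3 (by linarith)).mpr h5⟩, ?_⟩
      simp
    · rintro ⟨q, ⟨h1, h2, h3, h4, h5⟩, rfl⟩
      exact ⟨h2, h1, h3, by linarith, (hkey q.1 q.2.1 q.2.2 h1 h2 h3 h4).mp h5⟩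
  have hAfin : A.Finite := tripleFinite (X : ℤ)
    (fun p hp => ⟨hp.1, hp.2.1, by have := hp.2.2.2.1; linarith⟩)
  have hBfin : B.Finite := tripleFinite (X : ℤ)
    (fun p hp => ⟨hp.1, hp.2.1, by have := hp.2.2.2.1; linarith⟩)
  have hCfin : C.Finite := tripleFinite (X : ℤ)
    (fun p hp => ⟨hp.1, hp.2.1, by have := hp.2.2.2.1; linarith⟩)
  have hcards : C.ncard = A.ncard := by rw [hCA, Set.ncard_image_of_injective _ swap3_inj]
  rw [hdecomp, Set.ncard_union_eq hd1 hAfin (hBfin.union hCfin),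
    Set.ncard_union_eq hd2 hBfin hCfin, hcards, L1, L2]
  ring

theorem stmt12 (X : ℕ) (hX : 0 < X) (hsq : ¬ IsSquare X) :
    Upsilon (X : ℤ) = 2 * L0lt (X : ℤ) + 4 * L1 (X : ℤ) + 2 * L2 (X : ℤ) := by
  have h1 := upsilon_split (X : ℤ) (by exact_mod_cast hX)
  have h2 := P0_card X hX hsq
  have h3 := SP_card X hX
  omega
end

section
/- Let X be a positive integer that is not a perfect square. Then Υ_<(X) = #ℒ₀^< + 2·#ℒ₁ + #ℒ₂, where ℒ₀^< = {(λ, μ) ∈ ℕ≥1 × ℕ≥1 : 4λμ = X and 2λ < √X}, ℒ₁ = {(λ, μ, m) ∈ ℕ≥1 × ℕ≥1 × ℕ≥1 : 4λμ = X − m² and 2λ < −m + √X}, and ℒ₂ = {(λ, μ, m) ∈ ℕ≥1 × ℕ≥1 × ℕ≥1 : 4λμ = X − m² and −m + √X ≤ 2λ ≤ m + √X}. -/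
open Matrix

theorem stmt13 (X : ℕ) (hX : 0 < X) (hsq : ¬ IsSquare X) :
    UpsilonLt (X : ℤ) = L0lt (X : ℤ) + 2 * L1 (X : ℤ) + L2 (X : ℤ) := by
  have hcast : (((X : ℕ) : ℤ) : ℝ) = (X : ℝ) := by push_cast; ring
  have hirr : Irrational (Real.sqrt (X : ℝ)) := irrational_sqrt_natCast_iff.2 hsq
  have hne : ∀ k : ℤ, (k : ℝ) ≠ Real.sqrt (X : ℝ) := fun k h => hirr.ne_int k h.symm
  -- the main set
  set r : ℝ := Real.sqrt (X : ℝ) with hr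
  set S : Set (ℤ × ℤ × ℤ) := {p | 0 < p.1 ∧ 0 < p.2.1 ∧
      4 * p.1 * p.2.1 + p.2.2 ^ 2 = (X : ℤ) ∧ ((2 * p.1 - p.2.2 : ℤ) : ℝ) < r} with hSdef
  set L0s : Set (ℤ × ℤ) := {p | 0 < p.1 ∧ 0 < p.2 ∧ 4 * p.1 * p.2 = (X : ℤ) ∧
      ((2 * p.1 : ℤ) : ℝ) < r} with hL0def
  set L1s : Set (ℤ × ℤ × ℤ) := {p | 0 < p.1 ∧ 0 < p.2.1 ∧ 0 < p.2.2 ∧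
      4 * p.1 * p.2.1 = (X : ℤ) - p.2.2 ^ 2 ∧
      ((2 * p.1 : ℤ) : ℝ) < -((p.2.2 : ℤ) : ℝ) + r} with hL1def
  set L2s : Set (ℤ × ℤ × ℤ) := {p | 0 < p.1 ∧ 0 < p.2.1 ∧ 0 < p.2.2 ∧
      4 * p.1 * p.2.1 = (X : ℤ) - p.2.2 ^ 2 ∧
      -((p.2.2 : ℤ) : ℝ) + r ≤ ((2 * p.1 : ℤ) : ℝ) ∧
      ((2 * p.1 : ℤ) : ℝ) ≤ ((p.2.2 : ℤ) : ℝ) + r} with hL2def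
  have hU : UpsilonLt (X : ℤ) = S.ncard := by
    simp only [UpsilonLt, hSdef, hr, hcast]
  have hL0 : L0lt (X : ℤ) = L0s.ncard := by
    simp only [L0lt, hL0def, hr, hcast]
  have hL1 : L1 (X : ℤ) = L1s.ncard := by
    simp only [L1, hL1def, hr, hcast]
  have hL2 : L2 (X : ℤ) = L2s.ncard := by
    simp only [L2, hL2def, hr, hcast]
  -- finiteness of S
  have hXZ : (1 : ℤ) ≤ (X : ℤ) := by exact_mod_cast hX
  have hSfin : S.Finite := by
    have hsub : S ⊆ (Set.Icc 1 (X : ℤ)) ×ˢ (Set.Icc 1 (X : ℤ)) ×ˢ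
        (Set.Icc (-(X : ℤ)) (X : ℤ)) := by
      rintro ⟨a, b, m⟩ ⟨ha, hb, heq, -⟩
      have hm2 : m ^ 2 ≤ (X : ℤ) := by nlinarith
      refine ⟨⟨ha, ?_⟩, ⟨hb, ?_⟩, ⟨?_, ?_⟩⟩ <;> nlinarith
    exact (((Set.finite_Icc _ _).prod ((Set.finite_Icc _ _).prod
      (Set.finite_Icc _ _)))).subset hsub
  -- the four pieces
  set S0 : Set (ℤ × ℤ × ℤ) := {p ∈ S | p.2.2 = 0} with hS0def
  set Sneg : Set (ℤ × ℤ × ℤ) := {p ∈ S | p.2.2 < 0} with hSnegdef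
  set Sp1 : Set (ℤ × ℤ × ℤ) := {p ∈ S | 0 < p.2.2 ∧ ((2 * p.1 : ℤ) : ℝ) < -(p.2.2 : ℝ) + r}
    with hSp1def
  set Sp2 : Set (ℤ × ℤ × ℤ) := {p ∈ S | 0 < p.2.2 ∧ ¬ (((2 * p.1 : ℤ) : ℝ) < -(p.2.2 : ℝ) + r)}
    with hSp2def
  have hsub0 : S0 ⊆ S := fun p hp => hp.1
  have hsubn : Sneg ⊆ S := fun p hp => hp.1
  have hsub1 : Sp1 ⊆ S := fun p hp => hp.1
  have hsub2 : Sp2 ⊆ S := fun p hp => hp.1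
  have hcover : S = S0 ∪ Sneg ∪ Sp1 ∪ Sp2 := by
    ext ⟨a, b, m⟩
    simp only [hS0def, hSnegdef, hSp1def, hSp2def, Set.mem_union, Set.mem_setOf_eq,
      Set.mem_sep_iff]
    constructor
    · intro h
      rcases lt_trichotomy m 0 with hm | hm | hm
      · exact Or.inl (Or.inl (Or.inr ⟨h, hm⟩))
      · exact Or.inl (Or.inl (Or.inl ⟨h, hm⟩))
      · by_cases hlt : ((2 * a : ℤ) : ℝ) < -(m : ℝ) + r
        · exact Or.inl (Or.inr ⟨h, hm, hlt⟩)
        · exact Or.inr ⟨h, hm, hlt⟩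
    · rintro ((( ⟨h, -⟩ | ⟨h, -⟩) | ⟨h, -⟩) | ⟨h, -⟩) <;> exact h
  have hd1 : Disjoint S0 Sneg := by
    rw [Set.disjoint_left]; rintro p ⟨-, h0⟩ ⟨-, hn⟩; omega
  have hd2 : Disjoint (S0 ∪ Sneg) Sp1 := by
    rw [Set.disjoint_left]
    rintro p (⟨-, h0⟩ | ⟨-, hn⟩) ⟨-, hp, -⟩ <;> omega
  have hd3 : Disjoint (S0 ∪ Sneg ∪ Sp1) Sp2 := by
    rw [Set.disjoint_left]
    rintro p ((⟨-, h0⟩ | ⟨-, hn⟩) | ⟨-, hp, hlt⟩) ⟨-, hp2, hnlt⟩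
    · omega
    · omega
    · exact hnlt hlt
  have hcard : S.ncard = S0.ncard + Sneg.ncard + Sp1.ncard + Sp2.ncard := by
    rw [hcover]
    rw [Set.ncard_union_eq hd3 (((hSfin.subset hsub0).union (hSfin.subset hsubn)).union
      (hSfin.subset hsub1)) (hSfin.subset hsub2),
      Set.ncard_union_eq hd2 ((hSfin.subset hsub0).union (hSfin.subset hsubn))
      (hSfin.subset hsub1),
      Set.ncard_union_eq hd1 (hSfin.subset hsub0) (hSfin.subset hsubn)]
  -- S0 ↔ L0s
  have hS0 : S0 = (fun q : ℤ × ℤ => (q.1, q.2, (0 : ℤ))) '' L0s := by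
    ext ⟨a, b, m⟩
    simp only [hS0def, hSdef, hL0def, Set.mem_setOf_eq, Set.mem_sep_iff, Set.mem_image,
      Prod.mk.injEq]
    constructor
    · rintro ⟨⟨ha, hb, heq, hlt⟩, hm0⟩
      subst hm0
      refine ⟨(a, b), ⟨ha, hb, by linarith, by push_cast at hlt ⊢; linarith⟩, rfl, rfl, rfl⟩
    · rintro ⟨⟨a', b'⟩, ⟨ha, hb, heq, hlt⟩, rfl, rfl, rfl⟩
      exact ⟨⟨ha, hb, by linarith, by push_cast at hlt ⊢; linarith⟩, rfl⟩
  have hinj0 : Function.Injective (fun q : ℤ × ℤ => (q.1, q.2, (0 : ℤ))) := by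
    rintro ⟨a, b⟩ ⟨c, d⟩ h
    simp only [Prod.mk.injEq] at h ⊢
    exact ⟨h.1, h.2.1⟩
  have hcard0 : S0.ncard = L0s.ncard := by
    rw [hS0, Set.ncard_image_of_injective _ hinj0]
  -- Sneg ↔ L1s
  have hSneg : Sneg = (fun p : ℤ × ℤ × ℤ => (p.1, p.2.1, -p.2.2)) '' L1s := by
    ext ⟨a, b, m⟩
    simp only [hSnegdef, hSdef, hL1def, Set.mem_setOf_eq, Set.mem_sep_iff, Set.mem_image,
      Prod.mk.injEq]
    constructor
    · rintro ⟨⟨ha, hb, heq, hlt⟩, hm⟩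
      refine ⟨(a, b, -m), ⟨ha, hb, ?_, ?_, ?_⟩, rfl, rfl, by ring⟩
      · show (0 : ℤ) < -m; omega
      · show 4 * a * b = (X : ℤ) - (-m) ^ 2
        have h2 : (-m) ^ 2 = m ^ 2 := by ring
        rw [h2]; linarith
      · show ((2 * a : ℤ) : ℝ) < -(((-m : ℤ)) : ℝ) + r
        push_cast at hlt ⊢; linarith
    · rintro ⟨⟨a', b', n⟩, ⟨ha, hb, hn, heq, hlt⟩, rfl, rfl, rfl⟩
      have hn' : (0 : ℤ) < n := hn
      have heq' : 4 * a' * b' = (X : ℤ) - n ^ 2 := heq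
      have hlt' : ((2 * a' : ℤ) : ℝ) < -((n : ℤ) : ℝ) + r := hlt
      clear hn heq hlt
      refine ⟨⟨ha, hb, ?_, ?_⟩, ?_⟩
      · show 4 * a' * b' + (-n) ^ 2 = (X : ℤ)
        have h2 : (-n) ^ 2 = n ^ 2 := by ring
        rw [h2]; linarith [heq']
      · show ((2 * a' - -n : ℤ) : ℝ) < r
        push_cast at hlt' ⊢; linarith [hlt']
      · show (-n : ℤ) < 0; omega
  have hinjn : Function.Injective (fun p : ℤ × ℤ × ℤ => (p.1, p.2.1, -p.2.2)) := by
    rintro ⟨a, b, m⟩ ⟨c, d, n⟩ h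
    simp only [Prod.mk.injEq] at h ⊢
    exact ⟨h.1, h.2.1, by omega⟩
  have hcardn : Sneg.ncard = L1s.ncard := by
    rw [hSneg, Set.ncard_image_of_injective _ hinjn]
  -- Sp1 = L1s
  have hSp1 : Sp1 = L1s := by
    ext ⟨a, b, m⟩
    simp only [hSp1def, hSdef, hL1def, Set.mem_setOf_eq, Set.mem_sep_iff]
    constructor
    · rintro ⟨⟨ha, hb, heq, -⟩, hm, hlt⟩
      exact ⟨ha, hb, hm, by linarith, by push_cast at hlt ⊢; linarith⟩
    · rintro ⟨ha, hb, hm, heq, hlt⟩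
      have hmpos : (0 : ℝ) < (m : ℤ) := by exact_mod_cast hm
      exact ⟨⟨ha, hb, by linarith, by push_cast at hlt ⊢; linarith⟩, hm,
        by push_cast at hlt ⊢; linarith⟩
  -- Sp2 = L2s
  have hSp2 : Sp2 = L2s := by
    ext ⟨a, b, m⟩
    simp only [hSp2def, hSdef, hL2def, Set.mem_setOf_eq, Set.mem_sep_iff, not_lt]
    constructor
    · rintro ⟨⟨ha, hb, heq, hlt⟩, hm, hge⟩
      exact ⟨ha, hb, hm, by linarith, by push_cast at hge ⊢; linarith,
        by push_cast at hlt ⊢; linarith⟩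
    · rintro ⟨ha, hb, hm, heq, hge, hle⟩
      have hne' : ((2 * a - m : ℤ) : ℝ) ≠ r := hne _
      have hlt' : ((2 * a - m : ℤ) : ℝ) < r := by
        rcases lt_or_eq_of_le (by push_cast at hle ⊢; linarith :
          ((2 * a - m : ℤ) : ℝ) ≤ r) with h | h
        · exact h
        · exact absurd h hne'
      exact ⟨⟨ha, hb, by linarith, hlt'⟩, hm, by push_cast at hge ⊢; linarith⟩
  rw [hU, hL0, hL1, hL2, hcard, hcard0, hcardn, hSp1, hSp2]
  ring
end
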